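/- arXiv:1105.6152 — 8 statements merged into one kernel-verified Lean document; each statement's English description precedes it below -/
import Mathlib

section
/- Let n ≥ 1 and 0 < α < n. There exist constants c₁, c₂ > 0 depending only on α and n such that for every ε > 0 there exists a nonnegative bounded measurable function f on ℝ^n with compact support such that, with μ_f the measure f dx: |{x ∈ ℝ^n : ℐ_α(f)(x) > 2 and ℳ_α(f)(x) ≤ ε}| ≥ c₁ e^{−c₂/ε} |{x ∈ ℝ^n : ℐ_α(f)(x) > 1}|, and moreover 0 < |{x : ℐ_α(f)(x) > 1}| < ∞. Here ℐ_α(f) and ℳ_α(f) denote the dyadic Riesz potential and dyadic fractional maximal function of μ_f, and |·| is Lebesgue measure. -/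
/-!
Put mass `ε (1 - s) s^j`, `s = 2^(α-n)`, uniformly on the shell
`[0, 2^(-j))^n \ [0, 2^(-j-1))^n` for `j < K ≈ 3 / (ε (1 - s))`. Every corner cube
`Q = [0, 2^(-j))^n` then has `ε (1 - s) ℓ(Q)^(n-α) ≤ μ(Q) ≤ ε ℓ(Q)^(n-α)`, so on
`[0, 2^(-K))^n` the potential `ℐ_α` collects `K` terms `≥ ε (1 - s)` and exceeds `2`, while
`ℳ_α ≤ ε`. The total mass is at most `1 - s` and lives in `[0, 1)^n`, so `ℐ_α ≤ 1` off
`[-1, 2]^n`. Comparing `|[0, 2^(-K))^n| = 2^(-Kn)` with `|[-1, 2]^n| = 3^n` gives the factor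
`e^(-c₂/ε)`.
-/

open MeasureTheory Metric Set ENNReal

noncomputable section

/-- The nonlinear potential `T^q_α(μ)(x) = (∫_0^∞ (μ(B(x,r))/r^{n−α})^q dr/r)^{1/q}`. -/
def Tpot (n : ℕ) (α q : ℝ) (μ : Measure (EuclideanSpace ℝ (Fin n)))
    (x : EuclideanSpace ℝ (Fin n)) : ℝ≥0∞ :=
  (∫⁻ r in Set.Ioi (0 : ℝ),
      (μ (Metric.ball x r) / ENNReal.ofReal (r ^ ((n : ℝ) - α))) ^ q
        * ENNReal.ofReal (1 / r)) ^ (1 / q)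

/-- The fractional maximal function `M_α(μ)(x) = sup_{r>0} μ(B(x,r))/r^{n−α}`. -/
def Mfrac (n : ℕ) (α : ℝ) (μ : Measure (EuclideanSpace ℝ (Fin n)))
    (x : EuclideanSpace ℝ (Fin n)) : ℝ≥0∞ :=
  ⨆ (r : ℝ) (_ : 0 < r), μ (Metric.ball x r) / ENNReal.ofReal (r ^ ((n : ℝ) - α))

/-- The closed axis-parallel cube with center `c` and side length `s`. -/
def axisCube (n : ℕ) (c : EuclideanSpace ℝ (Fin n)) (s : ℝ) :
    Set (EuclideanSpace ℝ (Fin n)) :=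
  {x | ∀ i, |x i - c i| ≤ s / 2}

/-- The weighted measure `|S|_σ = ∫_S σ dx`. -/
def wMeasure (n : ℕ) (σ : EuclideanSpace ℝ (Fin n) → ℝ)
    (S : Set (EuclideanSpace ℝ (Fin n))) : ℝ≥0∞ :=
  ∫⁻ x in S, ENNReal.ofReal (σ x)

/-- `σ` is a weak `A∞` weight with constants `Cσ, θ`: it is nonnegative, locally
integrable, and `|E|_σ ≤ Cσ (|E|/|Q|)^θ |2Q|_σ` for all cubes `Q` and measurable `E ⊆ Q`. -/
def IsWeakAInfty (n : ℕ) (σ : EuclideanSpace ℝ (Fin n) → ℝ) (Cσ θ : ℝ) : Prop :=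
  0 < Cσ ∧ 0 < θ ∧ (∀ x, 0 ≤ σ x) ∧ LocallyIntegrable σ ∧
    ∀ (c : EuclideanSpace ℝ (Fin n)) (s : ℝ), 0 < s →
      ∀ E ⊆ axisCube n c s, MeasurableSet E →
        wMeasure n σ E ≤
          ENNReal.ofReal (Cσ * ((volume E).toReal / (volume (axisCube n c s)).toReal) ^ θ)
            * wMeasure n σ (axisCube n c (2 * s))

/-- The dyadic cube `2^k(m + [0,1)^n)`. -/
def dyadicCube (n : ℕ) (k : ℤ) (m : Fin n → ℤ) : Set (EuclideanSpace ℝ (Fin n)) :=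
  {x | ∀ i, (2 : ℝ) ^ k * m i ≤ x i ∧ x i < (2 : ℝ) ^ k * (m i + 1)}

/-- The unique dyadic cube of side length `2^k` containing `x`. -/
def dyadicCubeAt (n : ℕ) (k : ℤ) (x : EuclideanSpace ℝ (Fin n)) :
    Set (EuclideanSpace ℝ (Fin n)) :=
  dyadicCube n k (fun i => ⌊x i / (2 : ℝ) ^ k⌋)

/-- The dyadic nonlinear potential `𝒯(μ)(x) = (∑_{Q ∋ x} (μ(Q)/ℓ(Q)^{n−α})^q)^{1/q}`. -/
def Tdyadic (n : ℕ) (α q : ℝ) (μ : Measure (EuclideanSpace ℝ (Fin n)))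
    (x : EuclideanSpace ℝ (Fin n)) : ℝ≥0∞ :=
  (∑' k : ℤ,
      (μ (dyadicCubeAt n k x) / ENNReal.ofReal (((2 : ℝ) ^ k) ^ ((n : ℝ) - α))) ^ q) ^ (1 / q)

/-- The dyadic fractional maximal function `ℳ_α(μ)(x) = sup_{Q ∋ x} μ(Q)/ℓ(Q)^{n−α}`. -/
def Mdyadic (n : ℕ) (α : ℝ) (μ : Measure (EuclideanSpace ℝ (Fin n)))
    (x : EuclideanSpace ℝ (Fin n)) : ℝ≥0∞ :=
  ⨆ k : ℤ, μ (dyadicCubeAt n k x) / ENNReal.ofReal (((2 : ℝ) ^ k) ^ ((n : ℝ) - α))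

/-- `F(μ)(x) = (∑_{j∈ℤ} (μ(B(x,2^j))/2^{j(n−α)})^q)^{1/q}`. -/
def Fpot (n : ℕ) (α q : ℝ) (μ : Measure (EuclideanSpace ℝ (Fin n)))
    (x : EuclideanSpace ℝ (Fin n)) : ℝ≥0∞ :=
  (∑' j : ℤ,
      (μ (Metric.ball x ((2 : ℝ) ^ j)) / ENNReal.ofReal (((2 : ℝ) ^ j) ^ ((n : ℝ) - α))) ^ q) ^ (1 / q)

/-- The exponential function extended to `ℝ≥0∞`. -/
def expE (t : ℝ≥0∞) : ℝ≥0∞ :=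
  if t = ⊤ then ⊤ else ENNReal.ofReal (Real.exp t.toReal)

/-- The centered Hardy–Littlewood maximal function of a measure. -/
def Mhl (n : ℕ) (ν : Measure (EuclideanSpace ℝ (Fin n)))
    (x : EuclideanSpace ℝ (Fin n)) : ℝ≥0∞ :=
  ⨆ (r : ℝ) (_ : 0 < r), ν (Metric.ball x r) / volume (Metric.ball x r)


namespace GoodLambda

variable {n : ℕ}

theorem setOf_forall_mem_eq_preimage (I : Set ℝ) :
    {x : EuclideanSpace ℝ (Fin n) | ∀ i, x i ∈ I} =
      (MeasurableEquiv.toLp 2 (Fin n → ℝ)).symm ⁻¹' univ.pi fun _ => I := by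
  ext x
  simp

theorem measurableSet_setOf_forall_mem {I : Set ℝ} (hI : MeasurableSet I) :
    MeasurableSet {x : EuclideanSpace ℝ (Fin n) | ∀ i, x i ∈ I} := by
  rw [setOf_forall_mem_eq_preimage]
  exact (MeasurableEquiv.toLp 2 (Fin n → ℝ)).symm.measurable (MeasurableSet.univ_pi fun _ => hI)

theorem volume_setOf_forall_mem (I : Set ℝ) :
    volume {x : EuclideanSpace ℝ (Fin n) | ∀ i, x i ∈ I} = volume I ^ n := by
  rw [setOf_forall_mem_eq_preimage,
    (EuclideanSpace.volume_preserving_symm_measurableEquiv_toLp (Fin n)).measure_preimage_equiv,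
    volume_pi_pi, Finset.prod_const, Finset.card_univ, Fintype.card_fin]

def originCube (n : ℕ) (t : ℝ) : Set (EuclideanSpace ℝ (Fin n)) := {x | ∀ i, x i ∈ Ico 0 t}

theorem measurableSet_originCube (t : ℝ) : MeasurableSet (originCube n t) :=
  measurableSet_setOf_forall_mem measurableSet_Ico

theorem volume_originCube (t : ℝ) : volume (originCube n t) = ENNReal.ofReal t ^ n := by
  rw [originCube, volume_setOf_forall_mem, Real.volume_Ico, sub_zero]

theorem originCube_mono {t t' : ℝ} (h : t ≤ t') : originCube n t ⊆ originCube n t' :=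
  fun _ hx i => Ico_subset_Ico_right h (hx i)

theorem mem_dyadicCubeAt_iff {k : ℤ} {x y : EuclideanSpace ℝ (Fin n)} :
    y ∈ dyadicCubeAt n k x ↔ ∀ i, ⌊y i / 2 ^ k⌋ = ⌊x i / 2 ^ k⌋ := by
  have h2k : (0 : ℝ) < 2 ^ k := zpow_pos two_pos k
  refine forall_congr' fun i => ?_
  rw [Int.floor_eq_iff, le_div_iff₀ h2k, div_lt_iff₀ h2k, mul_comm, mul_comm (_ + 1 : ℝ)]

theorem dyadicCubeAt_subset_of_le {k l : ℤ} (hkl : k ≤ l) (x : EuclideanSpace ℝ (Fin n)) :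
    dyadicCubeAt n k x ⊆ dyadicCubeAt n l x := by
  intro y hy
  rw [mem_dyadicCubeAt_iff] at hy ⊢
  have hpow : (2 : ℝ) ^ l = 2 ^ k * ((2 ^ (l - k).toNat : ℕ) : ℝ) := by
    rw [Nat.cast_pow, Nat.cast_ofNat, ← zpow_natCast, Int.toNat_of_nonneg (sub_nonneg.2 hkl),
      ← zpow_add₀ two_ne_zero, add_sub_cancel]
  intro i
  rw [hpow, ← div_div, ← div_div, Int.floor_div_natCast, Int.floor_div_natCast, hy i]

theorem abs_sub_lt_of_mem_dyadicCubeAt {k : ℤ} {x y : EuclideanSpace ℝ (Fin n)}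
    (hy : y ∈ dyadicCubeAt n k x) (i : Fin n) : |y i - x i| < 2 ^ k := by
  have h2k : (0 : ℝ) < 2 ^ k := zpow_pos two_pos k
  have := Int.abs_sub_lt_one_of_floor_eq_floor (mem_dyadicCubeAt_iff.1 hy i)
  rwa [← sub_div, abs_div, abs_of_pos h2k, div_lt_one h2k] at this

theorem dyadicCubeAt_eq_originCube {t : ℝ} {k : ℤ} {x : EuclideanSpace ℝ (Fin n)}
    (hx : x ∈ originCube n t) (ht : t ≤ 2 ^ k) :
    dyadicCubeAt n k x = originCube n (2 ^ k) := by
  have h2k : (0 : ℝ) < 2 ^ k := zpow_pos two_pos k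
  have floor_eq_zero : ∀ r : ℝ, ⌊r / 2 ^ k⌋ = 0 ↔ r ∈ Ico 0 (2 ^ k) := fun r => by
    rw [Int.floor_eq_zero_iff, mem_Ico, mem_Ico, le_div_iff₀ h2k, zero_mul, div_lt_one h2k]
  ext y
  rw [mem_dyadicCubeAt_iff]
  refine forall_congr' fun i => ?_
  rw [(floor_eq_zero (x i)).2 (Ico_subset_Ico_right ht (hx i)), floor_eq_zero]

theorem two_zpow_rpow_sub (k : ℤ) (a b : ℝ) :
    ((2 : ℝ) ^ k) ^ (a - b) = ((2 : ℝ) ^ (b - a)) ^ (-k) := by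
  rw [← Real.rpow_intCast 2 k, ← Real.rpow_mul zero_le_two, ← Real.rpow_intCast,
    ← Real.rpow_mul (by positivity)]
  congr 1
  push_cast
  ring

theorem two_rpow_sub_lt_one {α : ℝ} (hαn : α < n) : (2 : ℝ) ^ (α - n) < 1 :=
  Real.rpow_lt_one_of_one_lt_of_neg one_lt_two (by linarith)

theorem Tdyadic_one_eq_tsum (α : ℝ) (μ : Measure (EuclideanSpace ℝ (Fin n)))
    (x : EuclideanSpace ℝ (Fin n)) :
    Tdyadic n α 1 μ x =
      ∑' k : ℤ, μ (dyadicCubeAt n k x) / ENNReal.ofReal (((2 : ℝ) ^ k) ^ ((n : ℝ) - α)) := by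
  simp [Tdyadic]

theorem natCast_mul_le_Tdyadic_one {α : ℝ} {μ : Measure (EuclideanSpace ℝ (Fin n))} {K : ℕ}
    {B : ℝ≥0∞} (hμ : ∀ j < K, B * ENNReal.ofReal (((2 : ℝ) ^ (-(j : ℤ))) ^ ((n : ℝ) - α)) ≤
      μ (originCube n (2 ^ (-(j : ℤ)))))
    {x : EuclideanSpace ℝ (Fin n)} (hx : x ∈ originCube n (2 ^ (-(K : ℤ)))) :
    K * B ≤ Tdyadic n α 1 μ x := by
  set term := fun k : ℤ => μ (dyadicCubeAt n k x) / ENNReal.ofReal (((2 : ℝ) ^ k) ^ ((n : ℝ) - α))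
  have hterm : ∀ j < K, B ≤ term (-(j : ℤ)) := fun j hj => by
    simp only [term]
    rw [dyadicCubeAt_eq_originCube hx (zpow_le_zpow_right₀ one_le_two (by omega))]
    exact (ENNReal.le_div_iff_mul_le (Or.inl (by simp; positivity)) (Or.inl ofReal_ne_top)).2
      (hμ j hj)
  calc (K : ℝ≥0∞) * B = ∑ j ∈ Finset.range K, B := by simp
    _ ≤ ∑ j ∈ Finset.range K, term (-(j : ℤ)) :=
      Finset.sum_le_sum fun j hj => hterm j (Finset.mem_range.1 hj)
    _ ≤ ∑' j : ℕ, term (-(j : ℤ)) := ENNReal.sum_le_tsum _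
    _ ≤ ∑' k : ℤ, term k :=
      ENNReal.tsum_comp_le_tsum_of_injective (fun _ _ h => by simpa using h) term
    _ = Tdyadic n α 1 μ x := (Tdyadic_one_eq_tsum α μ x).symm

theorem Mdyadic_le_of_originCube {α : ℝ} {μ : Measure (EuclideanSpace ℝ (Fin n))} {l : ℤ}
    {ε : ℝ≥0∞} (hμ0 : μ (originCube n (2 ^ l)) = 0)
    (hμ : ∀ k, l ≤ k →
      μ (originCube n (2 ^ k)) ≤ ε * ENNReal.ofReal (((2 : ℝ) ^ k) ^ ((n : ℝ) - α)))
    {x : EuclideanSpace ℝ (Fin n)} (hx : x ∈ originCube n (2 ^ l)) :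
    Mdyadic n α μ x ≤ ε := by
  refine iSup_le fun k => ?_
  rcases le_or_gt l k with hlk | hkl
  · rw [dyadicCubeAt_eq_originCube hx (zpow_le_zpow_right₀ one_le_two hlk)]
    exact ENNReal.div_le_of_le_mul (hμ k hlk)
  · have hsub : dyadicCubeAt n k x ⊆ originCube n (2 ^ l) :=
      (dyadicCubeAt_subset_of_le hkl.le x).trans (dyadicCubeAt_eq_originCube hx le_rfl).subset
    rw [measure_mono_null hsub hμ0, ENNReal.zero_div]
    exact zero_le

def outerBox (n : ℕ) : Set (EuclideanSpace ℝ (Fin n)) := {x | ∀ i, x i ∈ Icc (-1) 2}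

theorem volume_outerBox : volume (outerBox n) = ENNReal.ofReal 3 ^ n := by
  rw [outerBox, volume_setOf_forall_mem, Real.volume_Icc]
  norm_num

theorem dyadicCubeAt_subset_compl_originCube {k : ℤ} (hk : k ≤ 0) {x : EuclideanSpace ℝ (Fin n)}
    (hx : x ∉ outerBox n) : dyadicCubeAt n k x ⊆ (originCube n 1)ᶜ := by
  intro y hy hy1
  refine hx fun i => ?_
  have hxy := abs_lt.1 (abs_sub_lt_of_mem_dyadicCubeAt hy i)
  have h2k : (2 : ℝ) ^ k ≤ 1 := zpow_le_one_of_nonpos₀ one_le_two hk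
  have := hy1 i
  constructor <;> linarith [this.1, this.2]

/-- Outside `outerBox`, only cubes of side `≥ 1` see a measure carried by `[0, 1)^n`, and their
contributions form a geometric series of ratio `2^(α-n)`. -/
theorem Tdyadic_one_le_one_of_notMem_outerBox {α : ℝ} (hαn : α < n)
    {μ : Measure (EuclideanSpace ℝ (Fin n))} (hμ : μ univ ≤ ENNReal.ofReal (1 - 2 ^ (α - n)))
    (hsupp : μ (originCube n 1)ᶜ = 0) {x : EuclideanSpace ℝ (Fin n)} (hx : x ∉ outerBox n) :
    Tdyadic n α 1 μ x ≤ 1 := by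
  set s : ℝ := 2 ^ (α - n)
  have hs0 : 0 < s := by positivity
  have hs1 : s < 1 := two_rpow_sub_lt_one hαn
  set term := fun k : ℤ => μ (dyadicCubeAt n k x) / ENNReal.ofReal (((2 : ℝ) ^ k) ^ ((n : ℝ) - α))
  have hsupport : Function.support term ⊆ range ((↑) : ℕ → ℤ) := by
    intro k hk
    by_contra hkneg
    have hk0 : k ≤ 0 := by
      by_contra hpos
      exact hkneg ⟨k.toNat, by omega⟩
    refine hk ?_
    simp only [term]
    rw [measure_mono_null (dyadicCubeAt_subset_compl_originCube hk0 hx) hsupp,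
      ENNReal.zero_div]
  have hbound : ∀ i : ℕ, term i ≤ ENNReal.ofReal ((1 - s) * s ^ i) := fun i => by
    have hden : ((2 : ℝ) ^ (i : ℤ)) ^ ((n : ℝ) - α) = (s ^ i)⁻¹ := by
      rw [two_zpow_rpow_sub, zpow_neg, zpow_natCast]
    simp only [term]
    rw [hden, ENNReal.ofReal_inv_of_pos (by positivity), div_eq_mul_inv, inv_inv,
      ENNReal.ofReal_mul (by linarith)]
    gcongr
    exact (measure_mono (subset_univ _)).trans hμ
  calc Tdyadic n α 1 μ x = ∑' i : ℕ, term i := by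
        rw [Tdyadic_one_eq_tsum, ← Nat.cast_injective.tsum_eq hsupport]
    _ ≤ ∑' i : ℕ, ENNReal.ofReal ((1 - s) * s ^ i) := ENNReal.tsum_le_tsum hbound
    _ = 1 := by
      rw [← ENNReal.ofReal_tsum_of_nonneg (fun i => by have := hs1; positivity)
          ((summable_geometric_of_lt_one hs0.le hs1).mul_left _),
        tsum_mul_left, tsum_geometric_of_lt_one hs0.le hs1, mul_inv_cancel₀ (by linarith),
        ENNReal.ofReal_one]

def shell (n j : ℕ) : Set (EuclideanSpace ℝ (Fin n)) :=
  originCube n (2 ^ (-(j : ℤ))) \ originCube n (2 ^ (-(j : ℤ) - 1))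

def shellDensity (n K : ℕ) (a : ℕ → ℝ) (x : EuclideanSpace ℝ (Fin n)) : ℝ :=
  ∑ j ∈ Finset.range K, (shell n j).indicator (fun _ => a j / (volume (shell n j)).toReal) x

theorem measurableSet_shell (j : ℕ) : MeasurableSet (shell n j) :=
  (measurableSet_originCube _).diff (measurableSet_originCube _)

theorem shell_subset_originCube_one (j : ℕ) : shell n j ⊆ originCube n 1 :=
  fun _ hx => originCube_mono (zpow_le_one_of_nonpos₀ one_le_two (by omega)) hx.1

theorem volume_shell_ne_top (j : ℕ) : volume (shell n j) ≠ ⊤ :=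
  ((measure_mono (shell_subset_originCube_one j)).trans_lt
    (by rw [volume_originCube]; exact pow_lt_top ofReal_lt_top)).ne

theorem volume_shell_ne_zero (hn : 1 ≤ n) (j : ℕ) : volume (shell n j) ≠ 0 := by
  have hlt : (2 : ℝ) ^ (-(j : ℤ) - 1) < 2 ^ (-(j : ℤ)) :=
    zpow_lt_zpow_right₀ one_lt_two (by omega)
  rw [shell, measure_sdiff (originCube_mono hlt.le) (measurableSet_originCube _).nullMeasurableSet
    (by rw [volume_originCube]; exact pow_ne_top ofReal_ne_top), volume_originCube,
    volume_originCube]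
  exact (tsub_pos_of_lt (ENNReal.pow_lt_pow_left (by omega)
    ((ENNReal.ofReal_lt_ofReal_iff (by positivity)).2 hlt))).ne'

theorem shell_inter_originCube (j k : ℕ) :
    shell n j ∩ originCube n (2 ^ (-(k : ℤ))) = if k ≤ j then shell n j else ∅ := by
  split_ifs with hkj
  · exact inter_eq_left.2 fun x hx =>
      originCube_mono (zpow_le_zpow_right₀ one_le_two (by omega)) hx.1
  · exact eq_empty_iff_forall_notMem.2 fun x ⟨⟨_, hx⟩, hxk⟩ =>
      hx (originCube_mono (zpow_le_zpow_right₀ one_le_two (by omega)) hxk)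

section

variable {K : ℕ} {a : ℕ → ℝ}

theorem measurable_shellDensity : Measurable (shellDensity n K a) :=
  Finset.measurable_sum _ fun j _ => measurable_const.indicator (measurableSet_shell j)

theorem shellDensity_nonneg (ha : ∀ j, 0 ≤ a j) (x : EuclideanSpace ℝ (Fin n)) :
    0 ≤ shellDensity n K a x :=
  Finset.sum_nonneg fun j _ => indicator_nonneg (fun _ _ => by have := ha j; positivity) x

theorem shellDensity_le (ha : ∀ j, 0 ≤ a j) (x : EuclideanSpace ℝ (Fin n)) :
    shellDensity n K a x ≤ ∑ j ∈ Finset.range K, a j / (volume (shell n j)).toReal :=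
  Finset.sum_le_sum fun j _ => indicator_le_self' (fun _ _ => by have := ha j; positivity) x

theorem shellDensity_eq_zero {x : EuclideanSpace ℝ (Fin n)} (hx : x ∉ originCube n 1) :
    shellDensity n K a x = 0 :=
  Finset.sum_eq_zero fun j _ =>
    indicator_of_notMem (fun hxj => hx (shell_subset_originCube_one j hxj)) _

theorem hasCompactSupport_shellDensity : HasCompactSupport (shellDensity n K a) := by
  let box := EuclideanSpace.equiv (Fin n) ℝ ⁻¹' univ.pi fun _ => Icc (0 : ℝ) 1
  refine HasCompactSupport.intro (K := box) ?_ fun x hx => shellDensity_eq_zero fun hx1 => ?_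
  · exact (EuclideanSpace.equiv (Fin n) ℝ).toHomeomorph.isCompact_preimage.2
      (isCompact_univ_pi fun _ => isCompact_Icc)
  · exact hx fun i _ => Ico_subset_Icc_self (hx1 i)

theorem withDensity_shellDensity_originCube (hn : 1 ≤ n) (ha : ∀ j, 0 ≤ a j) (k : ℕ) :
    volume.withDensity (fun y => ENNReal.ofReal (shellDensity n K a y))
        (originCube n (2 ^ (-(k : ℤ)))) = ∑ j ∈ Finset.Ico k K, ENNReal.ofReal (a j) := by
  have hdens : ∀ y, ENNReal.ofReal (shellDensity n K a y) = ∑ j ∈ Finset.range K,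
      (shell n j).indicator (fun _ => ENNReal.ofReal (a j / (volume (shell n j)).toReal)) y := by
    intro y
    rw [shellDensity, ENNReal.ofReal_sum_of_nonneg fun j _ =>
      indicator_nonneg (fun _ _ => by have := ha j; positivity) y]
    exact Finset.sum_congr rfl fun j _ => by by_cases hy : y ∈ shell n j <;> simp [hy]
  have hmass : ∀ j, ENNReal.ofReal (a j / (volume (shell n j)).toReal) * volume (shell n j) =
      ENNReal.ofReal (a j) := fun j => by
    rw [ENNReal.ofReal_div_of_pos (ENNReal.toReal_pos (volume_shell_ne_zero hn j)
      (volume_shell_ne_top j)), ENNReal.ofReal_toReal (volume_shell_ne_top j),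
      ENNReal.div_mul_cancel (volume_shell_ne_zero hn j) (volume_shell_ne_top j)]
  simp_rw [withDensity_apply _ (measurableSet_originCube _), hdens]
  rw [lintegral_finsetSum _ fun j _ => measurable_const.indicator (measurableSet_shell j)]
  simp_rw [lintegral_indicator (measurableSet_shell _), setLIntegral_const,
    Measure.restrict_apply (measurableSet_shell _), shell_inter_originCube]
  calc _ = ∑ j ∈ Finset.range K, if k ≤ j then ENNReal.ofReal (a j) else 0 :=
        Finset.sum_congr rfl fun j _ => by split_ifs <;> simp [hmass]
    _ = _ := by
      rw [← Finset.sum_filter]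
      congr 1
      ext j
      simp only [Finset.mem_filter, Finset.mem_range, Finset.mem_Ico]
      omega

theorem withDensity_shellDensity_compl_originCube :
    volume.withDensity (fun y => ENNReal.ofReal (shellDensity n K a y)) (originCube n 1)ᶜ = 0 := by
  rw [withDensity_apply _ (measurableSet_originCube 1).compl,
    setLIntegral_congr_fun (measurableSet_originCube 1).compl
      fun x hx => by rw [shellDensity_eq_zero hx, ENNReal.ofReal_zero]]
  exact lintegral_zero

end

variable {α ε : ℝ}

def shellCount (n : ℕ) (α ε : ℝ) : ℕ := ⌈3 / (ε * (1 - 2 ^ (α - n)))⌉₊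

def extremalMass (n : ℕ) (α ε : ℝ) (j : ℕ) : ℝ := ε * (1 - 2 ^ (α - n)) * (2 ^ (α - n)) ^ j

def extremalDensity (n : ℕ) (α ε : ℝ) : EuclideanSpace ℝ (Fin n) → ℝ :=
  shellDensity n (shellCount n α ε) (extremalMass n α ε)

local notation "μ" => volume.withDensity fun y => ENNReal.ofReal (extremalDensity n α ε y)

theorem extremalMass_nonneg (hαn : α < n) (hε : 0 ≤ ε) (j : ℕ) : 0 ≤ extremalMass n α ε j := by
  have := two_rpow_sub_lt_one hαn
  have : 0 ≤ 1 - (2 : ℝ) ^ (α - n) := by linarith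
  unfold extremalMass
  positivity

theorem le_withDensity_extremalDensity_originCube (hn : 1 ≤ n) (hαn : α < n) (hε : 0 ≤ ε)
    {j : ℕ} (hj : j < shellCount n α ε) :
    ENNReal.ofReal (ε * (1 - 2 ^ (α - n))) *
        ENNReal.ofReal (((2 : ℝ) ^ (-(j : ℤ))) ^ ((n : ℝ) - α)) ≤
      μ (originCube n (2 ^ (-(j : ℤ)))) := by
  rw [two_zpow_rpow_sub, neg_neg, zpow_natCast, ← ENNReal.ofReal_mul (by
      have := two_rpow_sub_lt_one hαn; nlinarith), extremalDensity,
    withDensity_shellDensity_originCube hn (extremalMass_nonneg hαn hε)]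
  exact Finset.single_le_sum (f := fun j => ENNReal.ofReal (extremalMass n α ε j))
    (fun _ _ => zero_le) (Finset.mem_Ico.2 ⟨le_rfl, hj⟩)

theorem withDensity_extremalDensity_originCube_le (hn : 1 ≤ n) (hαn : α < n) (hε : 0 ≤ ε)
    (k : ℕ) :
    μ (originCube n (2 ^ (-(k : ℤ)))) ≤
      ENNReal.ofReal ε * ENNReal.ofReal (((2 : ℝ) ^ (-(k : ℤ))) ^ ((n : ℝ) - α)) := by
  have hs1 := two_rpow_sub_lt_one hαn
  rw [extremalDensity, withDensity_shellDensity_originCube hn (extremalMass_nonneg hαn hε),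
    ← ENNReal.ofReal_sum_of_nonneg fun j _ => extremalMass_nonneg hαn hε j,
    ← ENNReal.ofReal_mul hε, two_zpow_rpow_sub, neg_neg, zpow_natCast]
  refine ENNReal.ofReal_le_ofReal ?_
  calc ∑ j ∈ Finset.Ico k (shellCount n α ε), extremalMass n α ε j
      = ε * (1 - 2 ^ (α - n)) * ∑ j ∈ Finset.Ico k (shellCount n α ε), ((2 : ℝ) ^ (α - n)) ^ j :=
        (Finset.mul_sum _ _ _).symm
    _ ≤ ε * (1 - 2 ^ (α - n)) * (((2 : ℝ) ^ (α - n)) ^ k / (1 - 2 ^ (α - n))) := by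
        have : 0 ≤ 1 - (2 : ℝ) ^ (α - n) := by linarith
        gcongr
        exact geom_sum_Ico_le_of_lt_one (by positivity) hs1
    _ = ε * ((2 : ℝ) ^ (α - n)) ^ k := by
        field_simp [(by linarith : 1 - (2 : ℝ) ^ (α - n) ≠ 0)]

theorem withDensity_extremalDensity_univ_le (hn : 1 ≤ n) (hαn : α < n) (hε : 0 ≤ ε) :
    μ univ ≤ ENNReal.ofReal ε := by
  have hcompl : μ (originCube n 1)ᶜ = 0 := withDensity_shellDensity_compl_originCube
  rw [← measure_add_measure_compl (measurableSet_originCube 1), hcompl, add_zero]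
  simpa using withDensity_extremalDensity_originCube_le hn hαn hε 0

theorem originCube_subset_two_lt_Tdyadic_and_Mdyadic_le (hn : 1 ≤ n) (hαn : α < n)
    (hε : 0 < ε) :
    originCube n (2 ^ (-(shellCount n α ε : ℤ))) ⊆
      {x | ENNReal.ofReal 2 < Tdyadic n α 1 μ x ∧ Mdyadic n α μ x ≤ ENNReal.ofReal ε} := by
  have hc : 0 < ε * (1 - 2 ^ (α - n)) := mul_pos hε (by linarith [two_rpow_sub_lt_one hαn])
  intro x hx
  constructor
  · calc ENNReal.ofReal 2 < ENNReal.ofReal 3 := by rw [ENNReal.ofReal_lt_ofReal_iff] <;> norm_num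
      _ ≤ shellCount n α ε * ENNReal.ofReal (ε * (1 - 2 ^ (α - n))) := by
        rw [← ENNReal.ofReal_natCast, ← ENNReal.ofReal_mul (Nat.cast_nonneg _)]
        exact ENNReal.ofReal_le_ofReal ((div_le_iff₀ hc).1 (Nat.le_ceil _))
      _ ≤ Tdyadic n α 1 μ x := natCast_mul_le_Tdyadic_one
        (fun j hj => le_withDensity_extremalDensity_originCube hn hαn hε.le hj) hx
  · refine Mdyadic_le_of_originCube ?_ (fun k hk => ?_) hx
    · rw [extremalDensity, withDensity_shellDensity_originCube hn (extremalMass_nonneg hαn hε.le),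
        Finset.Ico_self, Finset.sum_empty]
    rcases le_or_gt k 0 with hk0 | hk0
    · obtain ⟨j, rfl⟩ : ∃ j : ℕ, k = -(j : ℤ) := ⟨k.natAbs, by omega⟩
      exact withDensity_extremalDensity_originCube_le hn hαn hε.le j
    · have hside : 1 ≤ ((2 : ℝ) ^ k) ^ ((n : ℝ) - α) :=
        Real.one_le_rpow (one_le_zpow₀ one_le_two hk0.le) (by linarith)
      calc μ (originCube n (2 ^ k)) ≤ μ univ := measure_mono (subset_univ _)
        _ ≤ ENNReal.ofReal ε * 1 := by
          rw [mul_one]; exact withDensity_extremalDensity_univ_le hn hαn hε.le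
        _ ≤ _ := by gcongr; exact ENNReal.one_le_ofReal.2 hside

theorem setOf_one_lt_Tdyadic_subset_outerBox (hn : 1 ≤ n) (hαn : α < n) (hε : 0 ≤ ε)
    (hε1 : ε ≤ 1 - 2 ^ (α - n)) :
    {x | ENNReal.ofReal 1 < Tdyadic n α 1 μ x} ⊆ outerBox n := by
  intro x hx
  by_contra hxo
  have hle := Tdyadic_one_le_one_of_notMem_outerBox hαn
    ((withDensity_extremalDensity_univ_le hn hαn hε).trans (ENNReal.ofReal_le_ofReal hε1))
    withDensity_shellDensity_compl_originCube hxo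
  exact not_lt.2 hle (by simpa using hx)

theorem exp_neg_le_two_zpow_neg_ceil_pow {b : ℝ} (hb : 0 ≤ b) (n : ℕ) :
    Real.exp (-(n * Real.log 2 * (b + 1))) ≤ ((2 : ℝ) ^ (-(⌈b⌉₊ : ℤ))) ^ n := by
  rw [← Real.exp_log (by positivity : (0 : ℝ) < ((2 : ℝ) ^ (-(⌈b⌉₊ : ℤ))) ^ n), Real.exp_le_exp,
    Real.log_pow, Real.log_zpow]
  have hceil := Nat.ceil_lt_add_one hb
  have hlog := Real.log_pos one_lt_two
  have := mul_le_mul_of_nonneg_left hceil.le (by positivity : 0 ≤ (n : ℝ) * Real.log 2)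
  push_cast
  linarith

def expConst (n : ℕ) (α : ℝ) : ℝ := 3 * n * Real.log 2 / (1 - 2 ^ (α - n))

theorem expConst_pos {n : ℕ} {α : ℝ} (hn : 1 ≤ n) (hαn : α < n) : 0 < expConst n α := by
  have := two_rpow_sub_lt_one hαn
  have : (1 : ℝ) ≤ n := by exact_mod_cast hn
  exact div_pos (by positivity) (by linarith)

theorem exp_mul_exp_le_two_zpow_neg_shellCount_pow {n : ℕ} {α ε : ℝ} (hn : 1 ≤ n)
    (hαn : α < n) (hε : 0 < ε) :
    Real.exp (-(n * Real.log 2) - expConst n α / (1 - 2 ^ (α - n))) *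
        Real.exp (-expConst n α / ε) ≤
      ((2 : ℝ) ^ (-(shellCount n α (min ε (1 - 2 ^ (α - n))) : ℤ))) ^ n := by
  have h1s : 0 < 1 - (2 : ℝ) ^ (α - n) := by linarith [two_rpow_sub_lt_one hαn]
  have hc := expConst_pos hn hαn
  have hinv : expConst n α / min ε (1 - 2 ^ (α - n)) ≤
      expConst n α / ε + expConst n α / (1 - 2 ^ (α - n)) := by
    rcases min_cases ε (1 - 2 ^ (α - n)) with ⟨h, -⟩ | ⟨h, -⟩ <;> rw [h]
    · linarith [div_pos hc h1s]
    · linarith [div_pos hc hε]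
  set ε₀ := min ε (1 - 2 ^ (α - n))
  have hε₀ : 0 < ε₀ := lt_min hε h1s
  have hK : n * Real.log 2 * (3 / (ε₀ * (1 - 2 ^ (α - n))) + 1) =
      expConst n α / ε₀ + n * Real.log 2 := by
    rw [expConst]
    field_simp
  calc _ = Real.exp (-(n * Real.log 2) - expConst n α / (1 - 2 ^ (α - n)) +
        -expConst n α / ε) := (Real.exp_add _ _).symm
    _ ≤ Real.exp (-(n * Real.log 2 * (3 / (ε₀ * (1 - 2 ^ (α - n))) + 1))) :=
      Real.exp_le_exp.2 (by rw [hK, neg_div]; linarith)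
    _ ≤ _ := exp_neg_le_two_zpow_neg_ceil_pow (by positivity) n

theorem ofReal_mul_volume_outerBox_le {n : ℕ} {α ε : ℝ} (hn : 1 ≤ n) (hαn : α < n)
    (hε : 0 < ε) :
    ENNReal.ofReal (Real.exp (-(n * Real.log 2) - expConst n α / (1 - 2 ^ (α - n))) / 3 ^ n *
        Real.exp (-expConst n α / ε)) * volume (outerBox n) ≤
      volume (originCube n (2 ^ (-(shellCount n α (min ε (1 - 2 ^ (α - n))) : ℤ)))) := by
  rw [volume_outerBox, volume_originCube, ← ENNReal.ofReal_pow zero_le_three,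
    ← ENNReal.ofReal_mul (by positivity), ← ENNReal.ofReal_pow (by positivity)]
  refine ENNReal.ofReal_le_ofReal (le_of_eq_of_le ?_
    (exp_mul_exp_le_two_zpow_neg_shellCount_pow hn hαn hε))
  field_simp

end GoodLambda

open GoodLambda in
theorem good_lambda_sharpness_general (n : ℕ) (hn : 1 ≤ n) (α : ℝ) (hαn : α < n) :
    ∃ c₁ c₂ : ℝ, 0 < c₁ ∧ 0 < c₂ ∧
      ∀ ε : ℝ, 0 < ε →
        ∃ f : EuclideanSpace ℝ (Fin n) → ℝ, Measurable f ∧ (∀ x, 0 ≤ f x) ∧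
          (∃ Cb : ℝ, ∀ x, f x ≤ Cb) ∧ HasCompactSupport f ∧
          ENNReal.ofReal (c₁ * Real.exp (-c₂ / ε)) *
              volume {x | ENNReal.ofReal 1 <
                Tdyadic n α 1 (volume.withDensity fun y => ENNReal.ofReal (f y)) x}
            ≤ volume {x | ENNReal.ofReal 2 <
                Tdyadic n α 1 (volume.withDensity fun y => ENNReal.ofReal (f y)) x ∧
                Mdyadic n α (volume.withDensity fun y => ENNReal.ofReal (f y)) x ≤
                  ENNReal.ofReal ε} ∧
          0 < volume {x | ENNReal.ofReal 1 <
                Tdyadic n α 1 (volume.withDensity fun y => ENNReal.ofReal (f y)) x} ∧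
          volume {x | ENNReal.ofReal 1 <
                Tdyadic n α 1 (volume.withDensity fun y => ENNReal.ofReal (f y)) x} < ⊤ := by
  refine ⟨Real.exp (-(n * Real.log 2) - expConst n α / (1 - 2 ^ (α - n))) / 3 ^ n, expConst n α,
    by positivity, expConst_pos hn hαn, fun ε hε => ?_⟩
  set ε₀ := min ε (1 - 2 ^ (α - n))
  have hε₀ : 0 < ε₀ := lt_min hε (by linarith [two_rpow_sub_lt_one hαn])
  have ha := extremalMass_nonneg hαn hε₀.le
  have hgood := originCube_subset_two_lt_Tdyadic_and_Mdyadic_le hn hαn hε₀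
  have hbad := setOf_one_lt_Tdyadic_subset_outerBox hn hαn hε₀.le (min_le_right _ _)
  have hcore : originCube n (2 ^ (-(shellCount n α ε₀ : ℤ))) ⊆
      {x | ENNReal.ofReal 1 < Tdyadic n α 1
        (volume.withDensity fun y => ENNReal.ofReal (extremalDensity n α ε₀ y)) x} :=
    fun x hx => (ENNReal.ofReal_lt_ofReal_iff two_pos |>.2 one_lt_two).trans (hgood hx).1
  have hcore_pos : 0 < volume (originCube n (2 ^ (-(shellCount n α ε₀ : ℤ)))) := by
    rw [volume_originCube]
    positivity
  refine ⟨extremalDensity n α ε₀, measurable_shellDensity, shellDensity_nonneg ha,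
    ⟨_, shellDensity_le ha⟩, hasCompactSupport_shellDensity, ?_,
    hcore_pos.trans_le (measure_mono hcore),
    (measure_mono hbad).trans_lt (volume_outerBox ▸ pow_lt_top ofReal_lt_top)⟩
  calc _ ≤ _ * volume (outerBox n) := by gcongr
    _ ≤ volume (originCube n (2 ^ (-(shellCount n α ε₀ : ℤ)))) :=
      ofReal_mul_volume_outerBox_le hn hαn hε
    _ ≤ _ := measure_mono fun x hx => And.imp_right
      (fun hM => hM.trans (ENNReal.ofReal_le_ofReal (min_le_left _ _))) (hgood hx)

/-- **Sharpness of the good-λ inequality** (Proposition 2.2): there are `c₁, c₂ > 0`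
so that for every `ε > 0` there is `f ≥ 0` bounded, measurable, compactly supported with
`|{ℐ_α(f) > 2, ℳ_α(f) ≤ ε}| ≥ c₁ e^{−c₂/ε} |{ℐ_α(f) > 1}|` and `0 < |{ℐ_α(f) > 1}| < ∞`.
Here `ℐ_α = 𝒯^1_α` is the dyadic Riesz potential. -/
theorem good_lambda_sharpness (n : ℕ) (hn : 1 ≤ n) (α : ℝ) (hα : 0 < α) (hαn : α < n) :
    ∃ c₁ c₂ : ℝ, 0 < c₁ ∧ 0 < c₂ ∧
      ∀ ε : ℝ, 0 < ε →
        ∃ f : EuclideanSpace ℝ (Fin n) → ℝ, Measurable f ∧ (∀ x, 0 ≤ f x) ∧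
          (∃ Cb : ℝ, ∀ x, f x ≤ Cb) ∧ HasCompactSupport f ∧
          ENNReal.ofReal (c₁ * Real.exp (-c₂ / ε)) *
              volume {x | ENNReal.ofReal 1 <
                Tdyadic n α 1 (volume.withDensity fun y => ENNReal.ofReal (f y)) x}
            ≤ volume {x | ENNReal.ofReal 2 <
                Tdyadic n α 1 (volume.withDensity fun y => ENNReal.ofReal (f y)) x ∧
                Mdyadic n α (volume.withDensity fun y => ENNReal.ofReal (f y)) x ≤
                  ENNReal.ofReal ε} ∧
          0 < volume {x | ENNReal.ofReal 1 <
                Tdyadic n α 1 (volume.withDensity fun y => ENNReal.ofReal (f y)) x} ∧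
          volume {x | ENNReal.ofReal 1 <
                Tdyadic n α 1 (volume.withDensity fun y => ENNReal.ofReal (f y)) x} < ⊤ :=
  good_lambda_sharpness_general n hn α hαn
end
end

section
/- Let n ≥ 1 and 0 < α < n, and let μ be a nonnegative locally finite Borel measure on ℝ^n. Let Q₀ ∈ 𝒬 be a dyadic cube with ℓ(Q₀) = 2^{j₀}, and suppose there exists a point z ∈ Q₀ with ℳ_α(μ)(z) ≤ s for some s > 0. Then for every integer k ≤ j₀ and every γ > 0: |{x ∈ Q₀ : μ(Q_k(x))/2^{k(n−α)} > γ}| ≤ (s/γ) · 2^{(k−j₀)α} · |Q₀|, where Q_k(x) denotes the unique dyadic cube of side length 2^k containing x and |·| denotes Lebesgue measure. -/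
open MeasureTheory Metric Set ENNReal

noncomputable section

/-!
Cut `Q₀` into its dyadic subcubes of side `2^k`. The level set is the union of the
subcubes `Q` with `μ(Q) > γ 2^{k(n-α)}`; these are disjoint and lie in `Q₀`, so their
number `N` satisfies `N γ 2^{k(n-α)} ≤ μ(Q₀) ≤ s 2^{j₀(n-α)}`, the last step because
`z ∈ Q₀`. The level set has measure `N 2^{kn}`, and the bound follows from
`2^{kn} 2^{j₀(n-α)} = 2^{(k-j₀)α} 2^{j₀n} 2^{k(n-α)}`.
-/

lemma card_filter_lt_mul_le_measure {Ω ι : Type*} [MeasurableSpace Ω] (μ : Measure Ω)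
    {A : ι → Set Ω} {F : Set Ω} (S : Finset ι) (hA : ∀ i, MeasurableSet (A i))
    (hdisj : Pairwise (Function.onFun Disjoint A)) (hF : ∀ i ∈ S, A i ⊆ F) (t : ℝ≥0∞) :
    ((S.filter fun i => t < μ (A i)).card : ℝ≥0∞) * t ≤ μ F := by
  set S' := S.filter fun i => t < μ (A i)
  calc (S'.card : ℝ≥0∞) * t = S'.card • t := (nsmul_eq_mul _ _).symm
    _ ≤ ∑ i ∈ S', μ (A i) :=
        Finset.card_nsmul_le_sum _ _ _ fun i hi => (Finset.mem_filter.mp hi).2.le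
    _ = μ (⋃ i ∈ S', A i) :=
        (measure_biUnion_finset (hdisj.set_pairwise _) fun i _ => hA i).symm
    _ ≤ μ F := measure_mono <| iUnion₂_subset fun i hi => hF i (Finset.mem_filter.mp hi).1

lemma measurableSet_dyadicCube (n : ℕ) (k : ℤ) (m : Fin n → ℤ) :
    MeasurableSet (dyadicCube n k m) := by
  have hcoord : ∀ i, Measurable fun x : EuclideanSpace ℝ (Fin n) => x i := by fun_prop
  simp only [dyadicCube, ofPred_forall]
  exact MeasurableSet.iInter fun i =>
    (measurableSet_le measurable_const (hcoord i)).inter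
      (measurableSet_lt (hcoord i) measurable_const)

lemma volume_dyadicCube (n : ℕ) (k : ℤ) (m : Fin n → ℤ) :
    volume (dyadicCube n k m) = ENNReal.ofReal (((2 : ℝ) ^ k) ^ n) := by
  have hpre : dyadicCube n k m = WithLp.ofLp ⁻¹'
      univ.pi fun i => Ico ((2 : ℝ) ^ k * m i) ((2 : ℝ) ^ k * (m i + 1)) := by
    ext x
    simp [dyadicCube]
  rw [hpre, (PiLp.volume_preserving_ofLp (Fin n)).measure_preimage
    (MeasurableSet.univ_pi fun _ => measurableSet_Ico).nullMeasurableSet, volume_pi_pi]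
  simp only [Real.volume_Ico, mul_add_one, add_sub_cancel_left,
    Finset.prod_const, Finset.card_univ, Fintype.card_fin]
  rw [ENNReal.ofReal_pow (zpow_pos two_pos k).le]

lemma floor_div_eq_of_mem_dyadicCube {n : ℕ} {k : ℤ} {m : Fin n → ℤ}
    {x : EuclideanSpace ℝ (Fin n)} (hx : x ∈ dyadicCube n k m) (i : Fin n) :
    ⌊x i / (2 : ℝ) ^ k⌋ = m i := by
  have h2k : (0 : ℝ) < 2 ^ k := zpow_pos two_pos k
  rw [Int.floor_eq_iff, le_div_iff₀ h2k, div_lt_iff₀ h2k]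
  constructor <;> linarith [hx i]

lemma dyadicCubeAt_eq_of_mem {n : ℕ} {k : ℤ} {m : Fin n → ℤ}
    {x : EuclideanSpace ℝ (Fin n)} (hx : x ∈ dyadicCube n k m) :
    dyadicCubeAt n k x = dyadicCube n k m :=
  congrArg (dyadicCube n k) (funext (floor_div_eq_of_mem_dyadicCube hx))

lemma mem_dyadicCubeAt_self (n : ℕ) (k : ℤ) (x : EuclideanSpace ℝ (Fin n)) :
    x ∈ dyadicCubeAt n k x := by
  intro i
  have h2k : (0 : ℝ) < 2 ^ k := zpow_pos two_pos k
  rw [mul_comm, ← le_div_iff₀ h2k, mul_comm, ← div_lt_iff₀ h2k]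
  exact ⟨Int.floor_le _, Int.lt_floor_add_one _⟩

lemma pairwise_disjoint_dyadicCube (n : ℕ) (k : ℤ) :
    Pairwise (Function.onFun Disjoint (dyadicCube n k)) := fun _ _ hne =>
  disjoint_left.mpr fun _ h₁ h₂ => hne <| funext fun i =>
    (floor_div_eq_of_mem_dyadicCube h₁ i).symm.trans (floor_div_eq_of_mem_dyadicCube h₂ i)

/-- Indices of the dyadic subcubes of side `2^k` of the cube `dyadicCube n (k + d) m`. -/
def dyadicChildren (n d : ℕ) (m : Fin n → ℤ) : Finset (Fin n → ℤ) :=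
  Fintype.piFinset fun i => Finset.Ico (2 ^ d * m i) (2 ^ d * (m i + 1))

lemma dyadicCube_subset_of_mem_dyadicChildren {n d : ℕ} {m m' : Fin n → ℤ}
    (hm' : m' ∈ dyadicChildren n d m) (k : ℤ) :
    dyadicCube n k m' ⊆ dyadicCube n (k + d) m := by
  intro x hx i
  have h2k : (0 : ℝ) < 2 ^ k := zpow_pos two_pos k
  obtain ⟨hlo, hhi⟩ := Finset.mem_Ico.mp (Fintype.mem_piFinset.mp hm' i)
  have hlo' : (2 : ℝ) ^ d * m i ≤ m' i := by exact_mod_cast hlo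
  have hhi' : (m' i : ℝ) + 1 ≤ 2 ^ d * (m i + 1) := by
    exact_mod_cast Int.add_one_le_of_lt hhi
  rw [zpow_add₀ two_ne_zero, zpow_natCast]
  constructor <;> nlinarith [hx i]

lemma floor_div_mem_dyadicChildren {n d : ℕ} {k : ℤ} {m : Fin n → ℤ}
    {x : EuclideanSpace ℝ (Fin n)} (hx : x ∈ dyadicCube n (k + d) m) :
    (fun i => ⌊x i / (2 : ℝ) ^ k⌋) ∈ dyadicChildren n d m := by
  refine Fintype.mem_piFinset.mpr fun i => Finset.mem_Ico.mpr ?_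
  have h2k : (0 : ℝ) < 2 ^ k := zpow_pos two_pos k
  obtain ⟨hlo, hhi⟩ := hx i
  rw [zpow_add₀ two_ne_zero, zpow_natCast, mul_assoc] at hlo hhi
  rw [Int.le_floor, Int.floor_lt, le_div_iff₀ h2k, div_lt_iff₀ h2k]
  push_cast
  constructor <;> linarith

lemma measure_dyadicCube_le_of_Mdyadic_le {n : ℕ} {α : ℝ}
    {μ : Measure (EuclideanSpace ℝ (Fin n))} {j : ℤ} {m : Fin n → ℤ}
    {z : EuclideanSpace ℝ (Fin n)} (hz : z ∈ dyadicCube n j m)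
    {t : ℝ≥0∞} (hzM : Mdyadic n α μ z ≤ t) :
    μ (dyadicCube n j m) ≤ t * ENNReal.ofReal (((2 : ℝ) ^ j) ^ ((n : ℝ) - α)) := by
  have hpos : 0 < ((2 : ℝ) ^ j) ^ ((n : ℝ) - α) :=
    Real.rpow_pos_of_pos (zpow_pos two_pos j) _
  rw [← ENNReal.div_le_iff (by simpa using hpos) ofReal_ne_top, ← dyadicCubeAt_eq_of_mem hz]
  exact (le_iSup (fun j => μ (dyadicCubeAt n j z) /
    ENNReal.ofReal (((2 : ℝ) ^ j) ^ ((n : ℝ) - α))) j).trans hzM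

lemma two_zpow_rpow (k : ℤ) (a : ℝ) : ((2 : ℝ) ^ k) ^ a = 2 ^ ((k : ℝ) * a) := by
  rw [← Real.rpow_intCast, ← Real.rpow_mul zero_le_two]

lemma two_zpow_scaling (n : ℕ) (α : ℝ) (k j : ℤ) :
    ((2 : ℝ) ^ k) ^ n * ((2 : ℝ) ^ j) ^ ((n : ℝ) - α) =
      2 ^ (((k - j : ℤ) : ℝ) * α) * ((2 : ℝ) ^ j) ^ n * ((2 : ℝ) ^ k) ^ ((n : ℝ) - α) := by
  rw [← Real.rpow_natCast ((2 : ℝ) ^ k), ← Real.rpow_natCast ((2 : ℝ) ^ j)]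
  simp only [two_zpow_rpow, ← Real.rpow_add two_pos]
  congr 1
  push_cast
  ring

lemma mul_two_zpow_pow_le_of_mul_le {n : ℕ} {α N s γ : ℝ} {k j : ℤ} (hγ : 0 < γ)
    (h : N * (γ * ((2 : ℝ) ^ k) ^ ((n : ℝ) - α)) ≤ s * ((2 : ℝ) ^ j) ^ ((n : ℝ) - α)) :
    N * ((2 : ℝ) ^ k) ^ n ≤ s / γ * 2 ^ (((k - j : ℤ) : ℝ) * α) * ((2 : ℝ) ^ j) ^ n := by
  have hck : 0 < ((2 : ℝ) ^ k) ^ ((n : ℝ) - α) :=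
    Real.rpow_pos_of_pos (zpow_pos two_pos k) _
  rw [← mul_le_mul_iff_of_pos_right (mul_pos hγ hck)]
  calc N * ((2 : ℝ) ^ k) ^ n * (γ * ((2 : ℝ) ^ k) ^ ((n : ℝ) - α))
      = ((2 : ℝ) ^ k) ^ n * (N * (γ * ((2 : ℝ) ^ k) ^ ((n : ℝ) - α))) := by ring
    _ ≤ ((2 : ℝ) ^ k) ^ n * (s * ((2 : ℝ) ^ j) ^ ((n : ℝ) - α)) := by gcongr
    _ = s * (2 ^ (((k - j : ℤ) : ℝ) * α) * ((2 : ℝ) ^ j) ^ n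
          * ((2 : ℝ) ^ k) ^ ((n : ℝ) - α)) := by
      rw [← two_zpow_scaling]
      ring
    _ = _ := by field_simp

theorem dyadic_level_set_estimate_general (n : ℕ) (α : ℝ)
    (μ : Measure (EuclideanSpace ℝ (Fin n)))
    (j₀ : ℤ) (m : Fin n → ℤ) (s : ℝ) (hs : 0 < s)
    (hz : ∃ z ∈ dyadicCube n j₀ m, Mdyadic n α μ z ≤ ENNReal.ofReal s)
    (k : ℤ) (hk : k ≤ j₀) (γ : ℝ) (hγ : 0 < γ) :
    volume {x ∈ dyadicCube n j₀ m | ENNReal.ofReal γ <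
        μ (dyadicCubeAt n k x) / ENNReal.ofReal (((2 : ℝ) ^ k) ^ ((n : ℝ) - α))}
      ≤ ENNReal.ofReal (s / γ * (2 : ℝ) ^ (((k - j₀ : ℤ) : ℝ) * α)) *
          volume (dyadicCube n j₀ m) := by
  obtain ⟨z, hzQ, hzM⟩ := hz
  obtain ⟨d, rfl⟩ := Int.le.dest hk
  set c : ℤ → ℝ := fun j => ((2 : ℝ) ^ j) ^ ((n : ℝ) - α)
  have hc : ∀ j, 0 < c j := fun j => Real.rpow_pos_of_pos (zpow_pos two_pos j) _
  set S := (dyadicChildren n d m).filter fun m' =>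
    ENNReal.ofReal (γ * c k) < μ (dyadicCube n k m')
  have hcover : {x ∈ dyadicCube n (k + d) m | ENNReal.ofReal γ <
      μ (dyadicCubeAt n k x) / ENNReal.ofReal (c k)} ⊆ ⋃ m' ∈ S, dyadicCube n k m' := by
    rintro x ⟨hxQ, hxγ⟩
    refine mem_biUnion (Finset.mem_filter.mpr ⟨floor_div_mem_dyadicChildren hxQ, ?_⟩)
      (mem_dyadicCubeAt_self n k x)
    rwa [ENNReal.ofReal_mul hγ.le, ← ENNReal.lt_div_iff_mul_lt (Or.inl (by simpa using hc k))
      (Or.inl ofReal_ne_top)]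
  have hcount : (S.card : ℝ) * (γ * c k) ≤ s * c (k + d) := by
    have h := (card_filter_lt_mul_le_measure μ _ (measurableSet_dyadicCube n k)
      (pairwise_disjoint_dyadicCube n k)
      (fun _ hm' => dyadicCube_subset_of_mem_dyadicChildren hm' k)
      (ENNReal.ofReal (γ * c k))).trans (measure_dyadicCube_le_of_Mdyadic_le hzQ hzM)
    rw [← ENNReal.ofReal_natCast, ← ENNReal.ofReal_mul (by positivity),
      ← ENNReal.ofReal_mul hs.le] at h
    exact (ENNReal.ofReal_le_ofReal_iff (by positivity)).mp h
  calc _ ≤ ∑ m' ∈ S, volume (dyadicCube n k m') := (measure_mono hcover).trans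
          (measure_biUnion_finset_le S _)
    _ = ENNReal.ofReal (S.card * ((2 : ℝ) ^ k) ^ n) := by
      simp [volume_dyadicCube, ENNReal.ofReal_mul]
    _ ≤ _ := by
      rw [volume_dyadicCube, ← ENNReal.ofReal_mul (by positivity)]
      exact ENNReal.ofReal_le_ofReal (mul_two_zpow_pow_le_of_mul_le hγ hcount)

/-- **Level-set estimate for single-scale averages** (display (2.5)): if `Q₀` is a dyadic
cube of side `2^{j₀}` containing a point `z` with `ℳ_α(μ)(z) ≤ s`, then for `k ≤ j₀` and
`γ > 0`, `|{x ∈ Q₀ : μ(Q_k(x))/2^{k(n−α)} > γ}| ≤ (s/γ) 2^{(k−j₀)α} |Q₀|`. -/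
theorem dyadic_level_set_estimate (n : ℕ) (hn : 1 ≤ n) (α : ℝ)
    (hα : 0 < α) (hαn : α < n)
    (μ : Measure (EuclideanSpace ℝ (Fin n))) [IsLocallyFiniteMeasure μ]
    (j₀ : ℤ) (m : Fin n → ℤ) (s : ℝ) (hs : 0 < s)
    (hz : ∃ z ∈ dyadicCube n j₀ m, Mdyadic n α μ z ≤ ENNReal.ofReal s)
    (k : ℤ) (hk : k ≤ j₀) (γ : ℝ) (hγ : 0 < γ) :
    volume {x ∈ dyadicCube n j₀ m | ENNReal.ofReal γ <
        μ (dyadicCubeAt n k x) / ENNReal.ofReal (((2 : ℝ) ^ k) ^ ((n : ℝ) - α))}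
      ≤ ENNReal.ofReal (s / γ * (2 : ℝ) ^ (((k - j₀ : ℤ) : ℝ) * α)) *
          volume (dyadicCube n j₀ m) :=
  dyadic_level_set_estimate_general n α μ j₀ m s hs hz k hk γ hγ

end
end

section
/- Let n ≥ 1, 0 < α < n, 0 < q < ∞ and A > 0. There exists a constant C > 0 depending only on n, q, α and A such that the following holds: for every nonnegative locally finite Borel measure μ on ℝ^n, every λ > 0, every ε with 0 < ε < 1, every j₀ ∈ ℤ, and all points x, y ∈ ℝ^n with |x − y| ≤ A·2^{j₀}, if F(μ)(y) ≤ λ and M_α(μ)(x) ≤ ελ, then ∑_{j > j₀} (μ(B(x,2^j))/2^{j(n−α)})^q ≤ C λ^q. -/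
open MeasureTheory Metric Set ENNReal

noncomputable section

/-- **Tail estimate for the continuous dyadic potential** (display (2.13)): if
`|x − y| ≤ A·2^{j₀}`, `F(μ)(y) ≤ λ` and `M_α(μ)(x) ≤ ελ`, then
`∑_{j > j₀} (μ(B(x,2^j))/2^{j(n−α)})^q ≤ C λ^q`. -/
theorem continuous_tail_estimate (n : ℕ) (hn : 1 ≤ n) (α q A : ℝ)
    (hα : 0 < α) (hαn : α < n) (hq : 0 < q) (hA : 0 < A) :
    ∃ C : ℝ, 0 < C ∧
      ∀ (μ : Measure (EuclideanSpace ℝ (Fin n))), IsLocallyFiniteMeasure μ →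
        ∀ lam ε : ℝ, 0 < lam → 0 < ε → ε < 1 →
          ∀ (j₀ : ℤ) (x y : EuclideanSpace ℝ (Fin n)), dist x y ≤ A * (2 : ℝ) ^ j₀ →
            Fpot n α q μ y ≤ ENNReal.ofReal lam →
            Mfrac n α μ x ≤ ENNReal.ofReal (ε * lam) →
            ∑' j : {j : ℤ // j₀ < j},
                (μ (Metric.ball x ((2 : ℝ) ^ (j : ℤ))) /
                  ENNReal.ofReal (((2 : ℝ) ^ (j : ℤ)) ^ ((n : ℝ) - α))) ^ q
              ≤ ENNReal.ofReal (C * lam ^ q) := by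
  obtain ⟨k, hk⟩ : ∃ k : ℕ, 1 + A ≤ (2 : ℝ) ^ k := by
    obtain ⟨k, hk⟩ := pow_unbounded_of_one_lt (1 + A) (one_lt_two (α := ℝ))
    exact ⟨k, hk.le⟩
  have h2k : (0 : ℝ) < (2 : ℝ) ^ k := by positivity
  set c : ℝ := ((2 : ℝ) ^ k) ^ ((n : ℝ) - α) with hc
  have hcpos : 0 < c := Real.rpow_pos_of_pos h2k _
  refine ⟨c ^ q, Real.rpow_pos_of_pos hcpos _, ?_⟩
  intro μ _ lam ε hlam hε hε1 j₀ x y hxy hF _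
  -- notation for the terms of F at y
  set g : ℤ → ℝ≥0∞ := fun j =>
    (μ (Metric.ball y ((2 : ℝ) ^ j)) / ENNReal.ofReal (((2 : ℝ) ^ j) ^ ((n : ℝ) - α))) ^ q
    with hg
  have hcE : (0 : ℝ≥0∞) < ENNReal.ofReal c := ENNReal.ofReal_pos.2 hcpos
  have hcne : ENNReal.ofReal c ≠ 0 := hcE.ne'
  have hcnetop : ENNReal.ofReal c ≠ ⊤ := ENNReal.ofReal_ne_top
  -- pointwise bound on each tail term
  have key : ∀ j : ℤ, j₀ < j →
      (μ (Metric.ball x ((2 : ℝ) ^ j)) / ENNReal.ofReal (((2 : ℝ) ^ j) ^ ((n : ℝ) - α))) ^ q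
        ≤ ENNReal.ofReal c ^ q * g (j + (k : ℤ)) := by
    intro j hj
    have hjle : (2 : ℝ) ^ j₀ ≤ (2 : ℝ) ^ j := by
      apply zpow_le_zpow_right₀ one_le_two hj.le
    have h2jpos : (0 : ℝ) < (2 : ℝ) ^ j := by positivity
    have hsub : Metric.ball x ((2 : ℝ) ^ j) ⊆ Metric.ball y ((2 : ℝ) ^ (j + (k : ℤ))) := by
      intro z hz
      have hz' : dist z x < (2 : ℝ) ^ j := mem_ball.mp hz
      have : dist z y < (2 : ℝ) ^ (j + (k : ℤ)) := by
        calc dist z y ≤ dist z x + dist x y := dist_triangle _ _ _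
          _ < (2 : ℝ) ^ j + A * (2 : ℝ) ^ j₀ := by
              exact add_lt_add_of_lt_of_le hz' hxy
          _ ≤ (2 : ℝ) ^ j + A * (2 : ℝ) ^ j := by
              have := mul_le_mul_of_nonneg_left hjle hA.le
              linarith
          _ = (1 + A) * (2 : ℝ) ^ j := by ring
          _ ≤ (2 : ℝ) ^ k * (2 : ℝ) ^ j := by
              exact mul_le_mul_of_nonneg_right hk h2jpos.le
          _ = (2 : ℝ) ^ (j + (k : ℤ)) := by
              rw [zpow_add₀ (two_ne_zero) j (k : ℤ), zpow_natCast]; ring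
      exact mem_ball.mpr this
    have hμ : μ (Metric.ball x ((2 : ℝ) ^ j)) ≤ μ (Metric.ball y ((2 : ℝ) ^ (j + (k : ℤ)))) :=
      measure_mono hsub
    -- denominator factorization
    have hden : ((2 : ℝ) ^ (j + (k : ℤ))) ^ ((n : ℝ) - α)
        = ((2 : ℝ) ^ j) ^ ((n : ℝ) - α) * c := by
      rw [zpow_add₀ (two_ne_zero) j (k : ℤ), zpow_natCast,
        Real.mul_rpow h2jpos.le h2k.le]
    have hstep : μ (Metric.ball y ((2 : ℝ) ^ (j + (k : ℤ)))) /
          ENNReal.ofReal (((2 : ℝ) ^ j) ^ ((n : ℝ) - α))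
        = ENNReal.ofReal c *
          (μ (Metric.ball y ((2 : ℝ) ^ (j + (k : ℤ)))) /
            ENNReal.ofReal (((2 : ℝ) ^ (j + (k : ℤ))) ^ ((n : ℝ) - α))) := by
      rw [hden, ENNReal.ofReal_mul (Real.rpow_nonneg h2jpos.le _), ← mul_div_assoc,
        mul_comm (ENNReal.ofReal c), ENNReal.mul_div_mul_right _ _ hcne hcnetop]
    calc (μ (Metric.ball x ((2 : ℝ) ^ j)) / ENNReal.ofReal (((2 : ℝ) ^ j) ^ ((n : ℝ) - α))) ^ q
        ≤ (μ (Metric.ball y ((2 : ℝ) ^ (j + (k : ℤ)))) /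
            ENNReal.ofReal (((2 : ℝ) ^ j) ^ ((n : ℝ) - α))) ^ q := by
          exact ENNReal.rpow_le_rpow (ENNReal.div_le_div_right hμ _) hq.le
      _ = ENNReal.ofReal c ^ q * g (j + (k : ℤ)) := by
          rw [hstep, ENNReal.mul_rpow_of_nonneg _ _ hq.le]
  -- sum of F-terms at y is ≤ λ^q
  have hsumg : ∑' j : ℤ, g j ≤ ENNReal.ofReal (lam ^ q) := by
    have h1 : ∑' j : ℤ, g j = (Fpot n α q μ y) ^ q := by
      rw [Fpot, ← ENNReal.rpow_mul, one_div_mul_cancel hq.ne', ENNReal.rpow_one]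
    rw [h1, ← ENNReal.ofReal_rpow_of_nonneg hlam.le hq.le]
    exact ENNReal.rpow_le_rpow hF hq.le
  have hinj : Function.Injective (fun j : {j : ℤ // j₀ < j} => (j : ℤ) + (k : ℤ)) := by
    intro a b hab
    exact Subtype.ext (by simpa using hab)
  calc ∑' j : {j : ℤ // j₀ < j},
        (μ (Metric.ball x ((2 : ℝ) ^ (j : ℤ))) /
          ENNReal.ofReal (((2 : ℝ) ^ (j : ℤ)) ^ ((n : ℝ) - α))) ^ q
      ≤ ∑' j : {j : ℤ // j₀ < j}, ENNReal.ofReal c ^ q * g ((j : ℤ) + (k : ℤ)) :=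
        ENNReal.tsum_le_tsum fun j => key j j.2
    _ = ENNReal.ofReal c ^ q * ∑' j : {j : ℤ // j₀ < j}, g ((j : ℤ) + (k : ℤ)) :=
        ENNReal.tsum_mul_left
    _ ≤ ENNReal.ofReal c ^ q * ∑' j : ℤ, g j := by
        exact mul_le_mul_right (ENNReal.tsum_comp_le_tsum_of_injective hinj g) _
    _ ≤ ENNReal.ofReal c ^ q * ENNReal.ofReal (lam ^ q) := mul_le_mul_right hsumg _
    _ = ENNReal.ofReal (c ^ q * lam ^ q) := by
        rw [ENNReal.ofReal_rpow_of_nonneg hcpos.le hq.le,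
          ← ENNReal.ofReal_mul (Real.rpow_nonneg hcpos.le _)]
    _ ≤ ENNReal.ofReal (c ^ q * lam ^ q) := le_refl _

end
end

section
/- Let n ≥ 1, 0 < α < n and 0 < q < ∞. There exist constants τ > 1 and C, c > 0, depending only on n, q and α, such that the following holds: for every nonnegative locally finite Borel measure μ on ℝ^n, every λ > 0, every ε with 0 < ε < 1, and every axis-parallel cube Q of side length ℓ(Q) = 2^{j₀} (j₀ ∈ ℤ), if there exists a point y ∈ ℝ^n with dist(y, Q) ≤ 6√n · ℓ(Q) and F(μ)(y) ≤ λ, then |{x ∈ Q : F(μ)(x) > τλ and M_α(μ)(x) ≤ ελ}| ≤ C e^{−c/ε^q} |Q|, where |·| denotes Lebesgue measure. -/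
open MeasureTheory Metric Set ENNReal

noncomputable section

/-!
Fix `x ∈ Q` and split the sum defining `F(μ)(x)^q` at the scales `2^J` and `2^(J+N)`, where
`N = ⌊ε^(-q)⌋` and `2^(J+N) = 2^(n+3) ℓ(Q)` bounds the distance from `Q` to `y`. The `N` middle
terms are each at most `M_α(μ)(x)^q ≤ (ελ)^q`, so together at most `λ^q`; above `2^(J+N)` the ball
`B(x, 2^j)` lies in `B(y, 2^(j+1))`, so those terms are dominated by `2^((n-α)q) F(μ)(y)^q`.
Hence if `F(μ)(x) > τλ`, then at some scale `r = 2^(J-1-i)` the density `μ(B(x, r)) / r^(n-α)`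
exceeds a threshold `λδγ^i`, where `γ = 2^(-α/2)` and the `q`-th powers of the thresholds sum to
`λ^q`. By Chebyshev's inequality and Fubini, the set of such `x ∈ Q` has measure at most
`(2r)^n μ(B(y, R)) / (λδγ^i r^(n-α))` with `R = 2^(J+N+1)`, and `μ(B(y, R)) ≤ λ R^(n-α)` because
`F(μ)(y) ≤ λ`. Summing over `i` leaves `≲ 2^(-αN) R^n ≲ e^(-α log 2 / ε^q) |Q|`.
-/

section AxisCube

variable {n : ℕ}

lemma axisCube_eq_preimage (c : EuclideanSpace ℝ (Fin n)) (s : ℝ) :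
    axisCube n c s = (MeasurableEquiv.toLp 2 (Fin n → ℝ)).symm ⁻¹'
      Set.univ.pi fun i => Icc (c i - s / 2) (c i + s / 2) := by
  ext x
  simp only [axisCube, mem_ofPred_eq, mem_preimage, MeasurableEquiv.coe_toLp_symm, mem_univ_pi,
    mem_Icc, abs_le]
  exact forall_congr' fun i => by constructor <;> rintro ⟨h₁, h₂⟩ <;> constructor <;> linarith

lemma measurableSet_axisCube (c : EuclideanSpace ℝ (Fin n)) (s : ℝ) :
    MeasurableSet (axisCube n c s) := by
  rw [axisCube_eq_preimage]
  exact (MeasurableEquiv.measurable _) (.univ_pi fun _ => measurableSet_Icc)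

lemma volume_axisCube (c : EuclideanSpace ℝ (Fin n)) {s : ℝ} (hs : 0 ≤ s) :
    volume (axisCube n c s) = ENNReal.ofReal (s ^ n) := by
  rw [axisCube_eq_preimage, (EuclideanSpace.volume_preserving_symm_measurableEquiv_toLp
    (Fin n)).measure_preimage (MeasurableSet.univ_pi fun _ => measurableSet_Icc).nullMeasurableSet,
    volume_pi_pi]
  simp [add_sub_sub_cancel, ENNReal.ofReal_pow hs]

lemma center_mem_axisCube (c : EuclideanSpace ℝ (Fin n)) {s : ℝ} (hs : 0 ≤ s) :
    c ∈ axisCube n c s := fun i => by simp; positivity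

lemma ball_subset_axisCube (z : EuclideanSpace ℝ (Fin n)) (r : ℝ) :
    ball z r ⊆ axisCube n z (2 * r) := fun x hx i => by
  have h := (PiLp.norm_apply_le (x - z) i).trans_lt (mem_ball_iff_norm.mp hx)
  simp only [PiLp.sub_apply, Real.norm_eq_abs] at h
  linarith

lemma volume_ball_le (z : EuclideanSpace ℝ (Fin n)) {r : ℝ} (hr : 0 ≤ r) :
    volume (ball z r) ≤ ENNReal.ofReal ((2 * r) ^ n) :=
  (measure_mono (ball_subset_axisCube z r)).trans_eq (volume_axisCube z (by positivity))

lemma dist_le_of_mem_axisCube {c u v : EuclideanSpace ℝ (Fin n)} {s : ℝ} (hs : 0 ≤ s)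
    (hu : u ∈ axisCube n c s) (hv : v ∈ axisCube n c s) :
    dist u v ≤ Real.sqrt n * s := by
  have hcoord : ∀ i, dist (u i) (v i) ^ 2 ≤ s ^ 2 := fun i => by
    have hui : |u i - c i| ≤ s / 2 := hu i
    have hvi : |c i - v i| ≤ s / 2 := abs_sub_comm (v i) (c i) ▸ hv i
    rw [Real.dist_eq]
    exact pow_le_pow_left₀ (abs_nonneg _) ((abs_sub_le _ _ _).trans (by linarith)) 2
  calc dist u v ≤ Real.sqrt (n * s ^ 2) := by
        rw [EuclideanSpace.dist_eq]
        gcongr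
        simpa using Finset.sum_le_card_nsmul Finset.univ _ _ fun i _ => hcoord i
    _ = Real.sqrt n * s := by rw [Real.sqrt_mul n.cast_nonneg, Real.sqrt_sq hs]

lemma dist_le_two_zpow_of_infDist_le (c : EuclideanSpace ℝ (Fin n))
    {x y : EuclideanSpace ℝ (Fin n)} (j : ℤ) (hx : x ∈ axisCube n c (2 ^ j))
    (hy : infDist y (axisCube n c (2 ^ j)) ≤ 6 * Real.sqrt n * 2 ^ j) :
    dist x y ≤ 2 ^ (j + n + 3) := by
  have hs : (0 : ℝ) < 2 ^ j := zpow_pos two_pos j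
  obtain ⟨z, hz, hyz⟩ := (infDist_lt_iff ⟨c, center_mem_axisCube c hs.le⟩).mp
    (hy.trans_lt (lt_add_of_pos_right _ hs))
  have hxz := dist_le_of_mem_axisCube hs.le hx hz
  have hsqrt : Real.sqrt n ≤ 2 ^ n := Real.sqrt_le_iff.mpr
    ⟨by positivity, by exact_mod_cast Nat.lt_two_pow_self.le.trans (Nat.le_self_pow two_ne_zero _)⟩
  have h1 : (1 : ℝ) ≤ 2 ^ n := one_le_pow₀ one_le_two
  calc dist x y ≤ dist x z + dist y z := dist_triangle_right x y z
    _ ≤ (7 * Real.sqrt n + 1) * 2 ^ j := by nlinarith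
    _ ≤ 2 ^ (n + 3 : ℤ) * 2 ^ j := by
        gcongr
        norm_num [zpow_add₀]
        nlinarith
    _ = 2 ^ (j + n + 3) := by rw [← zpow_add₀ two_ne_zero]; ring_nf

end AxisCube

section Chebyshev

variable {X : Type*} [PseudoMetricSpace X] [MeasurableSpace X] [OpensMeasurableSpace X]
  [SecondCountableTopology X]

lemma measurableSet_setOf_dist_lt (r : ℝ) : MeasurableSet {p : X × X | dist p.2 p.1 < r} :=
  measurableSet_lt (measurable_snd.dist measurable_fst) measurable_const

lemma measurable_measure_ball (μ : Measure X) [SFinite μ] (r : ℝ) :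
    Measurable fun x => μ (ball x r) :=
  measurable_measure_prodMk_left (measurableSet_setOf_dist_lt r)

lemma setLIntegral_measure_ball_eq (μ ν : Measure X) [SFinite μ] [SFinite ν] (Q : Set X)
    (r : ℝ) : ∫⁻ x in Q, μ (ball x r) ∂ν = ∫⁻ z, ν (ball z r ∩ Q) ∂μ := by
  have hball : ∀ z, (fun x => (x, z)) ⁻¹' {p : X × X | dist p.2 p.1 < r} = ball z r := fun z => by
    ext x; simp [dist_comm]
  calc ∫⁻ x in Q, μ (ball x r) ∂ν = (ν.restrict Q).prod μ {p | dist p.2 p.1 < r} :=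
        (Measure.prod_apply (measurableSet_setOf_dist_lt r)).symm
    _ = ∫⁻ z, ν (ball z r ∩ Q) ∂μ := by
        simp_rw [Measure.prod_apply_symm (measurableSet_setOf_dist_lt r), hball,
          Measure.restrict_apply measurableSet_ball]

theorem measure_setOf_lt_measure_ball_le (μ ν : Measure X) [SFinite μ] [SFinite ν]
    {Q U : Set X} (hQ : MeasurableSet Q) {r : ℝ} (hQU : ∀ x ∈ Q, ball x r ⊆ U) {V T : ℝ≥0∞}
    (hV : ∀ z, ν (ball z r) ≤ V) (hT₀ : T ≠ 0) (hT : T ≠ ⊤) :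
    ν {x ∈ Q | T < μ (ball x r)} ≤ V * μ U / T := by
  have hpt : ∀ z, ν (ball z r ∩ Q) ≤ U.indicator (fun _ => V) z := fun z => by
    by_cases hz : z ∈ U
    · simpa [hz] using (measure_mono inter_subset_left).trans (hV z)
    · suffices ball z r ∩ Q = ∅ by simp [this]
      refine eq_empty_of_forall_notMem fun x ⟨hxz, hxQ⟩ => hz (hQU x hxQ ?_)
      rwa [mem_ball_comm]
  calc ν {x ∈ Q | T < μ (ball x r)}
      ≤ ν.restrict Q {x | T ≤ μ (ball x r)} := by
        rw [Measure.restrict_apply' hQ]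
        exact measure_mono fun x ⟨hxQ, hx⟩ => ⟨hx.le, hxQ⟩
    _ ≤ (∫⁻ x in Q, μ (ball x r) ∂ν) / T :=
        meas_ge_le_lintegral_div (measurable_measure_ball μ r).aemeasurable hT₀ hT
    _ ≤ V * μ U / T := by
        rw [setLIntegral_measure_ball_eq]
        gcongr
        exact (lintegral_mono hpt).trans (lintegral_indicator_const_le U V)

end Chebyshev

lemma ENNReal.tsum_int_eq_add_sum_add (f : ℤ → ℝ≥0∞) (J : ℤ) (N : ℕ) :
    ∑' j, f j = ∑' i : ℕ, f (J - 1 - i) + ∑ i ∈ Finset.range N, f (J + i)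
      + ∑' i : ℕ, f (J + N + i) := by
  rw [← (Equiv.addLeft J).tsum_eq, tsum_of_nat_of_neg_add_one ENNReal.summable ENNReal.summable,
    ← ENNReal.summable.sum_add_tsum_nat_add' (k := N), add_comm, add_assoc]
  congr 2
  · funext i
    simp only [Equiv.coe_addLeft]
    ring_nf
  · exact tsum_congr fun i => by simp only [Equiv.coe_addLeft]; push_cast; ring_nf

lemma pow_natFloor_le_inv_mul_exp {β x : ℝ} (hβ₀ : 0 < β) (hβ₁ : β ≤ 1) :
    β ^ ⌊x⌋₊ ≤ β⁻¹ * Real.exp (Real.log β * x) := by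
  have hlog : Real.log β ≤ 0 := Real.log_nonpos hβ₀.le hβ₁
  rw [← Real.exp_log hβ₀, ← Real.exp_nat_mul, ← Real.exp_neg, ← Real.exp_add, Real.exp_le_exp,
    Real.log_exp]
  nlinarith [Nat.lt_floor_add_one x]

lemma ENNReal.tsum_mul_ofReal_geometric_rpow {γ q : ℝ} (hγ₀ : 0 ≤ γ) (hγ₁ : γ < 1) (hq : 0 < q)
    (L : ℝ≥0∞) : ∑' i : ℕ, (L * ENNReal.ofReal ((1 - γ ^ q) ^ (1 / q) * γ ^ i)) ^ q = L ^ q := by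
  have hg : γ ^ q < 1 := Real.rpow_lt_one hγ₀ hγ₁ hq
  have hterm : ∀ i : ℕ, (L * ENNReal.ofReal ((1 - γ ^ q) ^ (1 / q) * γ ^ i)) ^ q =
      L ^ q * (ENNReal.ofReal (1 - γ ^ q) * ENNReal.ofReal (γ ^ q) ^ i) := fun i => by
    rw [ENNReal.mul_rpow_of_nonneg _ _ hq.le, ENNReal.ofReal_rpow_of_nonneg (by positivity) hq.le,
      Real.mul_rpow (by positivity) (by positivity), ← Real.rpow_mul (by linarith),
      one_div_mul_cancel hq.ne', Real.rpow_one, ← Real.rpow_pow_comm hγ₀,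
      ENNReal.ofReal_mul (by linarith), ENNReal.ofReal_pow (by positivity)]
  simp_rw [hterm]
  rw [ENNReal.tsum_mul_left, ENNReal.tsum_mul_left, ENNReal.tsum_geometric, ← ENNReal.ofReal_one,
    ← ENNReal.ofReal_sub _ (by positivity), ENNReal.mul_inv_cancel
      (ENNReal.ofReal_pos.mpr (by linarith)).ne' ENNReal.ofReal_ne_top, mul_one]

lemma two_zpow_rpow_s11 (m : ℤ) (b : ℝ) : ((2 : ℝ) ^ m) ^ b = 2 ^ ((m : ℝ) * b) := by
  rw [← Real.rpow_intCast, ← Real.rpow_mul zero_le_two]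

/-- With threshold `δ γ^i` at scale `2^(J-1-i)` the Chebyshev bounds still decay like `γ^i`:
`γ = 2^(-α/2)` is the square root of the factor `2^(-α)` gained per halving of the scale. -/
lemma chebyshev_bound_eq (n : ℕ) (α : ℝ) {δ : ℝ} (hδ : δ ≠ 0) (J : ℤ) (N i : ℕ) :
    (2 * 2 ^ (J - 1 - i)) ^ n * ((2 : ℝ) ^ (J + N + 1)) ^ ((n : ℝ) - α) /
        (δ * ((2 : ℝ) ^ (-(α / 2))) ^ i * ((2 : ℝ) ^ (J - 1 - i)) ^ ((n : ℝ) - α))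
      = 2 ^ n * ((2 : ℝ) ^ (-α)) ^ (N + 2) * ((2 : ℝ) ^ (J + N + 1)) ^ n / δ *
          ((2 : ℝ) ^ (-(α / 2))) ^ i := by
  rw [← zpow_one_add₀ two_ne_zero]
  simp only [← Real.rpow_natCast, two_zpow_rpow_s11, ← Real.rpow_mul zero_le_two]
  field_simp
  simp only [← Real.rpow_natCast, ← Real.rpow_mul zero_le_two, ← Real.rpow_add two_pos]
  congr 1
  push_cast
  ring

lemma natFloor_inv_rpow_mul_ofReal_rpow_le {ε q lam : ℝ} (hε : 0 < ε) (hq : 0 < q) :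
    (⌊(ε ^ q)⁻¹⌋₊ : ℝ≥0∞) * ENNReal.ofReal (ε * lam) ^ q ≤ ENNReal.ofReal lam ^ q := by
  have hεq : 0 < ε ^ q := by positivity
  have hN : (⌊(ε ^ q)⁻¹⌋₊ : ℝ) * ε ^ q ≤ 1 :=
    (mul_le_mul_of_nonneg_right (Nat.floor_le (by positivity)) hεq.le).trans_eq
      (inv_mul_cancel₀ hεq.ne')
  rw [ENNReal.ofReal_mul hε.le, ENNReal.mul_rpow_of_nonneg _ _ hq.le, ← mul_assoc,
    ENNReal.ofReal_rpow_of_nonneg hε.le hq.le, ← ENNReal.ofReal_natCast,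
    ← ENNReal.ofReal_mul (by positivity)]
  exact mul_le_of_le_one_left (by positivity) (ENNReal.ofReal_le_one.mpr hN)

lemma two_rpow_neg_pow_natFloor_le {α : ℝ} (hα : 0 ≤ α) (x : ℝ) :
    ((2 : ℝ) ^ (-α)) ^ ⌊x⌋₊ ≤ 2 ^ α * Real.exp (-(α * Real.log 2) * x) := by
  convert pow_natFloor_le_inv_mul_exp (x := x) (by positivity : (0 : ℝ) < 2 ^ (-α))
    (Real.rpow_le_one_of_one_le_of_nonpos one_le_two (by linarith)) using 2
  · rw [Real.rpow_neg zero_le_two, inv_inv]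
  · rw [Real.log_rpow two_pos]
    ring_nf

section Potential

variable {n : ℕ} {α q : ℝ} {μ : Measure (EuclideanSpace ℝ (Fin n))}

def ballDensity (n : ℕ) (α : ℝ) (μ : Measure (EuclideanSpace ℝ (Fin n)))
    (x : EuclideanSpace ℝ (Fin n)) (j : ℤ) : ℝ≥0∞ :=
  μ (ball x (2 ^ j)) / ENNReal.ofReal (((2 : ℝ) ^ j) ^ ((n : ℝ) - α))

lemma ofReal_two_zpow_rpow_pos (j : ℤ) (a : ℝ) : 0 < ENNReal.ofReal (((2 : ℝ) ^ j) ^ a) :=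
  ENNReal.ofReal_pos.mpr (by positivity)

lemma Fpot_rpow_eq (hq : q ≠ 0) (x : EuclideanSpace ℝ (Fin n)) :
    Fpot n α q μ x ^ q = ∑' j, ballDensity n α μ x j ^ q := by
  rw [Fpot, one_div, ENNReal.rpow_inv_rpow hq]
  rfl

lemma ballDensity_le_Mfrac (x : EuclideanSpace ℝ (Fin n)) (j : ℤ) :
    ballDensity n α μ x j ≤ Mfrac n α μ x :=
  le_iSup₂ (f := fun r (_ : 0 < r) => μ (ball x r) / ENNReal.ofReal (r ^ ((n : ℝ) - α)))
    _ (zpow_pos two_pos j)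

lemma ballDensity_le_Fpot (hq : 0 < q) (x : EuclideanSpace ℝ (Fin n)) (j : ℤ) :
    ballDensity n α μ x j ≤ Fpot n α q μ x := by
  rw [← ENNReal.rpow_le_rpow_iff hq, Fpot_rpow_eq hq.ne']
  exact ENNReal.le_tsum (f := fun j => ballDensity n α μ x j ^ q) j

lemma measure_ball_le_of_Fpot_le (hq : 0 < q) {y : EuclideanSpace ℝ (Fin n)} {L : ℝ≥0∞}
    (hy : Fpot n α q μ y ≤ L) (j : ℤ) :
    μ (ball y (2 ^ j)) ≤ L * ENNReal.ofReal (((2 : ℝ) ^ j) ^ ((n : ℝ) - α)) :=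
  (ENNReal.div_le_iff (ofReal_two_zpow_rpow_pos j _).ne' ENNReal.ofReal_ne_top).mp
    ((ballDensity_le_Fpot hq y j).trans hy)

lemma ballDensity_le_of_dist_le {x y : EuclideanSpace ℝ (Fin n)} {j : ℤ} (h : dist x y ≤ 2 ^ j) :
    ballDensity n α μ x j ≤ ENNReal.ofReal (2 ^ ((n : ℝ) - α)) * ballDensity n α μ y (j + 1) := by
  have hsub : ball x (2 ^ j) ⊆ ball y (2 ^ (j + 1)) :=
    ball_subset_ball' (by rw [zpow_add_one₀ two_ne_zero]; linarith)
  have hden : ENNReal.ofReal (((2 : ℝ) ^ (j + 1)) ^ ((n : ℝ) - α)) =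
      ENNReal.ofReal (2 ^ ((n : ℝ) - α)) * ENNReal.ofReal (((2 : ℝ) ^ j) ^ ((n : ℝ) - α)) := by
    rw [← ENNReal.ofReal_mul (by positivity), ← Real.mul_rpow zero_le_two (by positivity),
      zpow_add_one₀ two_ne_zero, mul_comm]
  rw [ballDensity, ballDensity, hden, ← mul_div_assoc, ENNReal.mul_div_mul_left _ _
    (ENNReal.ofReal_pos.mpr (by positivity)).ne' ENNReal.ofReal_ne_top]
  exact ENNReal.div_le_div_right (measure_mono hsub) _

theorem Fpot_rpow_le (hq : 0 < q) {x y : EuclideanSpace ℝ (Fin n)} {J : ℤ} {N : ℕ}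
    (t : ℕ → ℝ≥0∞) (hxy : dist x y ≤ 2 ^ (J + N))
    (ht : ∀ i : ℕ, ballDensity n α μ x (J - 1 - i) ≤ t i) :
    Fpot n α q μ x ^ q ≤ ∑' i, t i ^ q + N * Mfrac n α μ x ^ q
      + ENNReal.ofReal (2 ^ ((n : ℝ) - α)) ^ q * Fpot n α q μ y ^ q := by
  rw [Fpot_rpow_eq hq.ne', Fpot_rpow_eq hq.ne', ENNReal.tsum_int_eq_add_sum_add _ J N]
  have hlarge : ∀ i : ℕ, ballDensity n α μ x (J + N + i) ^ q ≤
      ENNReal.ofReal (2 ^ ((n : ℝ) - α)) ^ q * ballDensity n α μ y (J + N + i + 1) ^ q :=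
    fun i => by
      rw [← ENNReal.mul_rpow_of_nonneg _ _ hq.le]
      exact ENNReal.rpow_le_rpow (ballDensity_le_of_dist_le
        (hxy.trans (zpow_le_zpow_right₀ one_le_two (by omega)))) hq.le
  gcongr ?_ + ?_ + ?_
  · exact ENNReal.tsum_le_tsum fun i => ENNReal.rpow_le_rpow (ht i) hq.le
  · refine (Finset.sum_le_card_nsmul _ _ _ fun i _ =>
      ENNReal.rpow_le_rpow (ballDensity_le_Mfrac x _) hq.le).trans_eq ?_
    simp [nsmul_eq_mul]
  · calc ∑' i : ℕ, ballDensity n α μ x (J + N + i) ^ q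
        ≤ ∑' i : ℕ, ENNReal.ofReal (2 ^ ((n : ℝ) - α)) ^ q *
            ballDensity n α μ y (J + N + i + 1) ^ q := ENNReal.tsum_le_tsum hlarge
      _ ≤ ENNReal.ofReal (2 ^ ((n : ℝ) - α)) ^ q * ∑' j, ballDensity n α μ y j ^ q := by
        rw [ENNReal.tsum_mul_left]
        gcongr
        exact ENNReal.tsum_comp_le_tsum_of_injective (fun a b h => by simpa using h)
          fun j => ballDensity n α μ y j ^ q

end Potential

section GoodLambda

variable {n : ℕ} {α q : ℝ} {μ : Measure (EuclideanSpace ℝ (Fin n))}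

theorem setOf_lt_Fpot_subset_iUnion (hq : 0 < q) {Q : Set (EuclideanSpace ℝ (Fin n))}
    {y : EuclideanSpace ℝ (Fin n)} {J : ℤ} {N : ℕ} (hQ : ∀ x ∈ Q, dist x y ≤ 2 ^ (J + N))
    {L M τ : ℝ≥0∞} (hy : Fpot n α q μ y ≤ L) (hM : N * M ^ q ≤ L ^ q)
    (hτ : 2 + ENNReal.ofReal (2 ^ ((n : ℝ) - α)) ^ q ≤ τ ^ q)
    (t : ℕ → ℝ≥0∞) (ht : ∑' i, t i ^ q ≤ L ^ q) :
    {x ∈ Q | τ * L < Fpot n α q μ x ∧ Mfrac n α μ x ≤ M} ⊆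
      ⋃ i : ℕ, {x ∈ Q | t i < ballDensity n α μ x (J - 1 - i)} := by
  rintro x ⟨hxQ, hxF, hxM⟩
  by_contra hx
  simp only [mem_iUnion, mem_ofPred_eq, not_exists, not_and, not_lt] at hx
  refine (ENNReal.rpow_lt_rpow hxF hq).not_ge ((Fpot_rpow_le hq t (hQ x hxQ) (hx · hxQ)).trans ?_)
  calc ∑' i, t i ^ q + N * Mfrac n α μ x ^ q
        + ENNReal.ofReal (2 ^ ((n : ℝ) - α)) ^ q * Fpot n α q μ y ^ q
      ≤ L ^ q + L ^ q + ENNReal.ofReal (2 ^ ((n : ℝ) - α)) ^ q * L ^ q := by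
        gcongr
        exact le_trans (by gcongr) hM
    _ = (2 + ENNReal.ofReal (2 ^ ((n : ℝ) - α)) ^ q) * L ^ q := by ring
    _ ≤ (τ * L) ^ q := by
        rw [ENNReal.mul_rpow_of_nonneg _ _ hq.le]
        gcongr

theorem volume_setOf_lt_ballDensity_le [IsLocallyFiniteMeasure μ] (hq : 0 < q)
    {Q : Set (EuclideanSpace ℝ (Fin n))} (hQm : MeasurableSet Q) {y : EuclideanSpace ℝ (Fin n)}
    {K : ℤ} (hQ : ∀ x ∈ Q, dist x y ≤ 2 ^ K) {L : ℝ≥0∞} (hy : Fpot n α q μ y ≤ L) (hL₀ : L ≠ 0)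
    (hL : L ≠ ⊤) {j : ℤ} (hj : j ≤ K) {t : ℝ} (ht : 0 < t) :
    volume {x ∈ Q | L * ENNReal.ofReal t < ballDensity n α μ x j} ≤
      ENNReal.ofReal ((2 * 2 ^ j) ^ n * ((2 : ℝ) ^ (K + 1)) ^ ((n : ℝ) - α) /
        (t * ((2 : ℝ) ^ j) ^ ((n : ℝ) - α))) := by
  have hr : (0 : ℝ) < 2 ^ j := zpow_pos two_pos j
  have hT : 0 < t * ((2 : ℝ) ^ j) ^ ((n : ℝ) - α) := by positivity
  have hset : {x ∈ Q | L * ENNReal.ofReal t < ballDensity n α μ x j} =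
      {x ∈ Q | L * ENNReal.ofReal (t * ((2 : ℝ) ^ j) ^ ((n : ℝ) - α)) < μ (ball x (2 ^ j))} := by
    ext x
    rw [mem_ofPred_eq, mem_ofPred_eq, ballDensity, ENNReal.lt_div_iff_mul_lt
      (Or.inl (ofReal_two_zpow_rpow_pos j _).ne') (Or.inl ENNReal.ofReal_ne_top),
      ENNReal.ofReal_mul ht.le, mul_assoc]
  have hball : ∀ x ∈ Q, ball x (2 ^ j) ⊆ ball y (2 ^ (K + 1)) := fun x hx =>
    ball_subset_ball' <| by
      rw [zpow_add_one₀ two_ne_zero]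
      linarith [hQ x hx, zpow_le_zpow_right₀ one_le_two hj (a := (2 : ℝ))]
  rw [hset]
  refine (measure_setOf_lt_measure_ball_le μ volume hQm hball (fun z => volume_ball_le z hr.le)
    (mul_ne_zero hL₀ (ENNReal.ofReal_pos.mpr hT).ne')
    (ENNReal.mul_ne_top hL ENNReal.ofReal_ne_top)).trans ?_
  calc ENNReal.ofReal ((2 * 2 ^ j) ^ n) * μ (ball y (2 ^ (K + 1))) /
        (L * ENNReal.ofReal (t * ((2 : ℝ) ^ j) ^ ((n : ℝ) - α)))
      ≤ ENNReal.ofReal ((2 * 2 ^ j) ^ n) *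
          (L * ENNReal.ofReal (((2 : ℝ) ^ (K + 1)) ^ ((n : ℝ) - α))) /
        (L * ENNReal.ofReal (t * ((2 : ℝ) ^ j) ^ ((n : ℝ) - α))) := by
        gcongr
        exact measure_ball_le_of_Fpot_le hq hy (K + 1)
    _ = _ := by
        rw [mul_left_comm, ENNReal.mul_div_mul_left _ _ hL₀ hL, ← ENNReal.ofReal_mul (by positivity),
          ← ENNReal.ofReal_div_of_pos hT]

theorem volume_iUnion_lt_ballDensity_le [IsLocallyFiniteMeasure μ] (hα : 0 < α) (hq : 0 < q)
    {Q : Set (EuclideanSpace ℝ (Fin n))} (hQm : MeasurableSet Q) {y : EuclideanSpace ℝ (Fin n)}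
    {J : ℤ} {N : ℕ} (hQ : ∀ x ∈ Q, dist x y ≤ 2 ^ (J + N)) {L : ℝ≥0∞} (hy : Fpot n α q μ y ≤ L)
    (hL₀ : L ≠ 0) (hL : L ≠ ⊤) {δ : ℝ} (hδ : 0 < δ) :
    volume (⋃ i : ℕ, {x ∈ Q | L * ENNReal.ofReal (δ * ((2 : ℝ) ^ (-(α / 2))) ^ i) <
        ballDensity n α μ x (J - 1 - i)}) ≤
      ENNReal.ofReal (2 ^ n * ((2 : ℝ) ^ (-α)) ^ (N + 2) * ((2 : ℝ) ^ (J + N + 1)) ^ n /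
        (δ * (1 - 2 ^ (-(α / 2))))) := by
  set γ : ℝ := 2 ^ (-(α / 2))
  have hγ₁ : γ < 1 := Real.rpow_lt_one_of_one_lt_of_neg one_lt_two (by linarith)
  set A : ℝ := 2 ^ n * ((2 : ℝ) ^ (-α)) ^ (N + 2) * ((2 : ℝ) ^ (J + N + 1)) ^ n / δ
  calc _ ≤ ∑' i : ℕ, volume {x ∈ Q | L * ENNReal.ofReal (δ * γ ^ i) <
          ballDensity n α μ x (J - 1 - i)} := measure_iUnion_le _
    _ ≤ ∑' i : ℕ, ENNReal.ofReal A * ENNReal.ofReal γ ^ i := ENNReal.tsum_le_tsum fun i => by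
        refine (volume_setOf_lt_ballDensity_le hq hQm hQ hy hL₀ hL (by omega)
          (by positivity)).trans_eq ?_
        rw [chebyshev_bound_eq n α hδ.ne', ENNReal.ofReal_mul (by positivity),
          ENNReal.ofReal_pow (by positivity)]
    _ = ENNReal.ofReal (A / (1 - γ)) := by
        rw [ENNReal.tsum_mul_left, ENNReal.tsum_geometric, ← ENNReal.ofReal_one,
          ← ENNReal.ofReal_sub _ (by positivity), ← ENNReal.ofReal_inv_of_pos (by linarith),
          ← ENNReal.ofReal_mul (by positivity), div_eq_mul_inv]
    _ = _ := by rw [div_div]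

def goodLambdaConst (n : ℕ) (α q : ℝ) : ℝ :=
  2 ^ n * ((2 : ℝ) ^ (-α)) ^ 2 * (2 ^ (n + 4)) ^ n /
    ((1 - ((2 : ℝ) ^ (-(α / 2))) ^ q) ^ (1 / q) * (1 - 2 ^ (-(α / 2))))

lemma goodLambdaConst_pos (hα : 0 < α) (hq : 0 < q) : 0 < goodLambdaConst n α q := by
  have hγ₁ : (2 : ℝ) ^ (-(α / 2)) < 1 := Real.rpow_lt_one_of_one_lt_of_neg one_lt_two (by linarith)
  have hγ : 0 < 1 - (2 : ℝ) ^ (-(α / 2)) := sub_pos.mpr hγ₁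
  have hδ : 0 < (1 - ((2 : ℝ) ^ (-(α / 2))) ^ q) ^ (1 / q) :=
    Real.rpow_pos_of_pos (sub_pos.mpr (Real.rpow_lt_one (by positivity) hγ₁ hq)) _
  unfold goodLambdaConst
  positivity

theorem volume_setOf_lt_Fpot_le [IsLocallyFiniteMeasure μ] (hα : 0 < α) (hq : 0 < q) {τ : ℝ}
    (hτ : 2 + ENNReal.ofReal (2 ^ ((n : ℝ) - α)) ^ q ≤ ENNReal.ofReal τ ^ q) {lam ε : ℝ}
    (hlam : 0 < lam) (hε : 0 < ε) (c : EuclideanSpace ℝ (Fin n)) (j₀ : ℤ)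
    {y : EuclideanSpace ℝ (Fin n)} (hy : infDist y (axisCube n c (2 ^ j₀)) ≤ 6 * √n * 2 ^ j₀)
    (hFy : Fpot n α q μ y ≤ ENNReal.ofReal lam) :
    volume {x ∈ axisCube n c (2 ^ j₀) | ENNReal.ofReal (τ * lam) < Fpot n α q μ x ∧
        Mfrac n α μ x ≤ ENNReal.ofReal (ε * lam)} ≤
      ENNReal.ofReal (goodLambdaConst n α q * (2 ^ α * Real.exp (-(α * Real.log 2) / ε ^ q))) *
        volume (axisCube n c (2 ^ j₀)) := by
  have hγ₁ : (2 : ℝ) ^ (-(α / 2)) < 1 := Real.rpow_lt_one_of_one_lt_of_neg one_lt_two (by linarith)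
  have hδ : 0 < (1 - ((2 : ℝ) ^ (-(α / 2))) ^ q) ^ (1 / q) :=
    Real.rpow_pos_of_pos (sub_pos.mpr (Real.rpow_lt_one (by positivity) hγ₁ hq)) _
  have hK := goodLambdaConst_pos (n := n) hα hq
  set N := ⌊(ε ^ q)⁻¹⌋₊
  set J : ℤ := j₀ + n + 3 - N
  have hQ : ∀ x ∈ axisCube n c (2 ^ j₀), dist x y ≤ 2 ^ (J + N) := fun x hx => by
    simpa [J] using dist_le_two_zpow_of_infDist_le c j₀ hx hy
  have hR : ((2 : ℝ) ^ (J + N + 1)) ^ n = (2 ^ (n + 4)) ^ n * ((2 : ℝ) ^ j₀) ^ n := by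
    rw [← mul_pow, ← zpow_natCast (2 : ℝ) (n + 4), ← zpow_add₀ two_ne_zero]
    congr 2
    push_cast
    omega
  calc _ ≤ volume (⋃ i : ℕ, {x ∈ axisCube n c (2 ^ j₀) | ENNReal.ofReal lam *
          ENNReal.ofReal ((1 - (2 ^ (-(α / 2))) ^ q) ^ (1 / q) * (2 ^ (-(α / 2))) ^ i) <
          ballDensity n α μ x (J - 1 - i)}) := by
        rw [ENNReal.ofReal_mul' hlam.le]
        exact measure_mono (setOf_lt_Fpot_subset_iUnion hq hQ hFy
          (natFloor_inv_rpow_mul_ofReal_rpow_le hε hq) hτ _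
          (ENNReal.tsum_mul_ofReal_geometric_rpow (by positivity) hγ₁ hq _).le)
    _ ≤ _ := volume_iUnion_lt_ballDensity_le hα hq (measurableSet_axisCube _ _) hQ hFy
          (by positivity) ENNReal.ofReal_ne_top hδ
    _ = ENNReal.ofReal (goodLambdaConst n α q * ((2 : ℝ) ^ (-α)) ^ N) *
          volume (axisCube n c (2 ^ j₀)) := by
        rw [volume_axisCube c (by positivity), ← ENNReal.ofReal_mul (by positivity), hR, pow_add,
          goodLambdaConst]
        congr 1
        ring
    _ ≤ _ := by
        gcongr
        rw [div_eq_mul_inv]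
        exact two_rpow_neg_pow_natFloor_le hα.le _

end GoodLambda

theorem continuous_good_lambda_local_general (n : ℕ) (α q : ℝ)
    (hα : 0 < α) (hq : 0 < q) :
    ∃ τ C c : ℝ, 1 < τ ∧ 0 < C ∧ 0 < c ∧
      ∀ (μ : Measure (EuclideanSpace ℝ (Fin n))), IsLocallyFiniteMeasure μ →
        ∀ lam ε : ℝ, 0 < lam → 0 < ε → ε < 1 →
          ∀ (center : EuclideanSpace ℝ (Fin n)) (j₀ : ℤ) (y : EuclideanSpace ℝ (Fin n)),
            Metric.infDist y (axisCube n center ((2 : ℝ) ^ j₀)) ≤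
              6 * Real.sqrt n * (2 : ℝ) ^ j₀ →
            Fpot n α q μ y ≤ ENNReal.ofReal lam →
            volume {x ∈ axisCube n center ((2 : ℝ) ^ j₀) |
                ENNReal.ofReal (τ * lam) < Fpot n α q μ x ∧
                Mfrac n α μ x ≤ ENNReal.ofReal (ε * lam)}
              ≤ ENNReal.ofReal (C * Real.exp (-c / ε ^ q)) *
                  volume (axisCube n center ((2 : ℝ) ^ j₀)) := by
  set τ : ℝ := (2 + (2 ^ ((n : ℝ) - α)) ^ q) ^ (1 / q)
  have hD : 0 ≤ ((2 : ℝ) ^ ((n : ℝ) - α)) ^ q := by positivity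
  have hτq : τ ^ q = 2 + (2 ^ ((n : ℝ) - α)) ^ q := by
    simp only [τ, one_div]
    exact Real.rpow_inv_rpow (by positivity) hq.ne'
  have hτ : 2 + ENNReal.ofReal (2 ^ ((n : ℝ) - α)) ^ q ≤ ENNReal.ofReal τ ^ q := by
    rw [ENNReal.ofReal_rpow_of_nonneg (x := τ) (by positivity) hq.le, hτq,
      ENNReal.ofReal_add zero_le_two hD, ENNReal.ofReal_rpow_of_nonneg (by positivity) hq.le,
      ENNReal.ofReal_ofNat]
  refine ⟨τ, goodLambdaConst n α q * 2 ^ α, α * Real.log 2,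
    Real.one_lt_rpow (by linarith) (by positivity),
    mul_pos (goodLambdaConst_pos hα hq) (by positivity), by positivity,
    fun μ _ lam ε hlam hε _ center j₀ y hy hFy => ?_⟩
  simpa only [mul_assoc] using volume_setOf_lt_Fpot_le hα hq hτ hlam hε center j₀ hy hFy

/-- **Local good-λ estimate on Whitney cubes** (continuous case): there exist `τ > 1` and
`C, c > 0` so that for every cube `Q` of side `2^{j₀}` admitting a point `y` with
`dist(y, Q) ≤ 6√n ℓ(Q)` and `F(μ)(y) ≤ λ`, one has
`|{x ∈ Q : F(μ)(x) > τλ, M_α(μ)(x) ≤ ελ}| ≤ C e^{−c/ε^q} |Q|`. -/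
theorem continuous_good_lambda_local (n : ℕ) (hn : 1 ≤ n) (α q : ℝ)
    (hα : 0 < α) (hαn : α < n) (hq : 0 < q) :
    ∃ τ C c : ℝ, 1 < τ ∧ 0 < C ∧ 0 < c ∧
      ∀ (μ : Measure (EuclideanSpace ℝ (Fin n))), IsLocallyFiniteMeasure μ →
        ∀ lam ε : ℝ, 0 < lam → 0 < ε → ε < 1 →
          ∀ (center : EuclideanSpace ℝ (Fin n)) (j₀ : ℤ) (y : EuclideanSpace ℝ (Fin n)),
            Metric.infDist y (axisCube n center ((2 : ℝ) ^ j₀)) ≤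
              6 * Real.sqrt n * (2 : ℝ) ^ j₀ →
            Fpot n α q μ y ≤ ENNReal.ofReal lam →
            volume {x ∈ axisCube n center ((2 : ℝ) ^ j₀) |
                ENNReal.ofReal (τ * lam) < Fpot n α q μ x ∧
                Mfrac n α μ x ≤ ENNReal.ofReal (ε * lam)}
              ≤ ENNReal.ofReal (C * Real.exp (-c / ε ^ q)) *
                  volume (axisCube n center ((2 : ℝ) ^ j₀)) :=
  continuous_good_lambda_local_general n α q hα hq
end
end

section
/- Let n ≥ 1, 0 < α < n, 0 < q < ∞ and A > 0. There exists a constant C_s > 0, depending only on n, q, α and A, such that the following holds: for every nonnegative locally finite Borel measure μ on ℝ^n, every λ > 0, every ε with 0 < ε < 1, every r₀ > 0, and all points x, y ∈ ℝ^n with |x − y| ≤ A r₀, if (T^q_α(μ)(y))^q ≤ λ and (M_α(μ)(x))^q ≤ ελ, then ∫_{r₀}^∞ (μ(B(x,r))/r^{n−α})^q dr/r ≤ (1 + C_s ε) λ. -/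
open MeasureTheory Metric Set ENNReal

noncomputable section

/-! For `r > r₀` put `v = r + A r₀`. Since `B(x,r) ⊆ B(y,v)`, the integrand of the tail at
`(x,r)` is at most the integrand of `T^q_α(μ)(y)^q` at `v` times `(v/r)^{(n-α)q+1}`, and by
convexity of `t ↦ t^{(n-α)q+1}` this factor is `1 + O(r₀/r)` uniformly for `r > r₀`. The main
part integrates, after the shift `r ↦ r + A r₀`, to at most `T^q_α(μ)(y)^q ≤ λ`. For the error
part, `B(y,v) ⊆ B(x,2v)` bounds the ratio at `(y,v)` by `2^{n-α} M_α(μ)(x)`, so the error is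
`O(ελ r₀/r²)`, whose integral over `r > r₀` is `O(ελ)`. -/

lemma one_add_rpow_le_chord {γ A t : ℝ} (hγ : 1 ≤ γ) (hA : 0 < A) (ht : 0 ≤ t) (htA : t ≤ A) :
    (1 + t) ^ γ ≤ 1 + t / A * ((1 + A) ^ γ - 1) := by
  have hb : 0 ≤ t / A := div_nonneg ht hA.le
  have hb1 : t / A ≤ 1 := (div_le_one hA).mpr htA
  have hcvx := (convexOn_rpow hγ).2 (mem_Ici.mpr zero_le_one)
    (mem_Ici.mpr (by linarith : (0 : ℝ) ≤ 1 + A)) (sub_nonneg.mpr hb1) hb (by ring)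
  have hpt : (1 - t / A) • (1 : ℝ) + (t / A) • (1 + A) = 1 + t := by
    simp only [smul_eq_mul]; field_simp; ring
  rw [hpt] at hcvx
  simp only [smul_eq_mul, Real.one_rpow] at hcvx
  linarith

lemma setLIntegral_Ioi_comp_add_right (G : ℝ → ℝ≥0∞) (a c : ℝ) :
    ∫⁻ r in Ioi c, G (r + a) = ∫⁻ s in Ioi (c + a), G s := by
  rw [← lintegral_indicator measurableSet_Ioi, ← lintegral_indicator measurableSet_Ioi,
    ← lintegral_add_right_eq_self (fun s => (Ioi (c + a)).indicator G s) a]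
  congr 1
  ext r
  simp only [indicator_apply, mem_Ioi, add_lt_add_iff_right]

lemma setLIntegral_Ioi_ofReal_div_sq {c r₀ : ℝ} (hc : 0 ≤ c) (hr₀ : 0 < r₀) :
    ∫⁻ r in Ioi r₀, ENNReal.ofReal (c / r ^ 2) = ENNReal.ofReal (c / r₀) := by
  have hrpow : ∀ r ∈ Ioi r₀, ENNReal.ofReal (c / r ^ 2) = ENNReal.ofReal (c * r ^ (-2 : ℝ)) := by
    intro r hr
    rw [Real.rpow_neg (hr₀.trans hr).le, Real.rpow_two, div_eq_mul_inv]
  have hint : IntegrableOn (fun r : ℝ => c * r ^ (-2 : ℝ)) (Ioi r₀) :=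
    (integrableOn_Ioi_rpow_of_lt (by norm_num) hr₀).const_mul c
  have hnonneg : 0 ≤ᵐ[volume.restrict (Ioi r₀)] fun r : ℝ => c * r ^ (-2 : ℝ) := by
    filter_upwards [self_mem_ae_restrict measurableSet_Ioi] with r hr
    have := (hr₀.trans hr).le
    positivity
  rw [setLIntegral_congr_fun measurableSet_Ioi hrpow,
    ← ofReal_integral_eq_lintegral_ofReal hint hnonneg, integral_const_mul,
    integral_Ioi_rpow_of_lt (by norm_num) hr₀]
  norm_num
  rw [Real.rpow_neg_one, div_eq_mul_inv]

section BallRatio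

variable {X : Type*} [PseudoMetricSpace X] [MeasurableSpace X]

def ballRatio (μ : Measure X) (p : ℝ) (x : X) (r : ℝ) : ℝ≥0∞ :=
  μ (ball x r) / ENNReal.ofReal (r ^ p)

variable {μ : Measure X} {p q : ℝ} {x y : X}

lemma ballRatio_le_mul_of_ball_subset {r v : ℝ} (hr : 0 < r) (hv : 0 < v)
    (h : ball x r ⊆ ball y v) :
    ballRatio μ p x r ≤ ballRatio μ p y v * ENNReal.ofReal ((v / r) ^ p) := by
  have hscale : (ENNReal.ofReal (v ^ p))⁻¹ * ENNReal.ofReal ((v / r) ^ p)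
      = (ENNReal.ofReal (r ^ p))⁻¹ := by
    rw [Real.div_rpow hv.le hr.le, ENNReal.ofReal_div_of_pos (Real.rpow_pos_of_pos hr p),
      div_eq_mul_inv, ← mul_assoc, ENNReal.inv_mul_cancel
        (ENNReal.ofReal_pos.mpr (Real.rpow_pos_of_pos hv p)).ne' ENNReal.ofReal_ne_top, one_mul]
  rw [ballRatio, ballRatio, div_eq_mul_inv, div_eq_mul_inv, mul_assoc, hscale]
  gcongr

lemma ballRatio_le_of_dist_le {M : ℝ≥0∞} (hM : ∀ s > 0, ballRatio μ p x s ≤ M)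
    {a v : ℝ} (hxy : dist x y ≤ a) (hav : a ≤ v) (hv : 0 < v) :
    ballRatio μ p y v ≤ M * ENNReal.ofReal (2 ^ p) := by
  have hsub : ball y v ⊆ ball x (2 * v) := fun z hz => by
    rw [mem_ball] at hz ⊢
    linarith [dist_triangle z y x, dist_comm x y]
  calc ballRatio μ p y v ≤ ballRatio μ p x (2 * v) * ENNReal.ofReal ((2 * v / v) ^ p) :=
        ballRatio_le_mul_of_ball_subset hv (by positivity) hsub
    _ ≤ M * ENNReal.ofReal (2 ^ p) := by
        rw [mul_div_assoc, div_self hv.ne', mul_one]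
        gcongr
        exact hM _ (by linarith)

lemma ballRatio_rpow_le_of_dist_le {M : ℝ≥0∞} (hM : ∀ s > 0, ballRatio μ p x s ≤ M)
    (hq : 0 < q) {a v : ℝ} (hxy : dist x y ≤ a) (hav : a ≤ v) (hv : 0 < v) :
    ballRatio μ p y v ^ q ≤ M ^ q * ENNReal.ofReal (2 ^ (p * q)) := by
  calc ballRatio μ p y v ^ q ≤ (M * ENNReal.ofReal (2 ^ p)) ^ q := by
        gcongr
        exact ballRatio_le_of_dist_le hM hxy hav hv
    _ = M ^ q * ENNReal.ofReal (2 ^ (p * q)) := by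
        rw [ENNReal.mul_rpow_of_nonneg _ _ hq.le,
          ENNReal.ofReal_rpow_of_nonneg (by positivity) hq.le, ← Real.rpow_mul zero_le_two]

lemma ballRatio_rpow_mul_inv_le {M : ℝ≥0∞} (hM : ∀ s > 0, ballRatio μ p x s ≤ M)
    (hp : 0 ≤ p) (hq : 0 < q) {A r₀ r : ℝ} (hA : 0 < A) (hr₀ : 0 < r₀) (hr : r₀ < r)
    (hxy : dist x y ≤ A * r₀) :
    ballRatio μ p x r ^ q * ENNReal.ofReal (1 / r)
      ≤ ballRatio μ p y (r + A * r₀) ^ q * ENNReal.ofReal (1 / (r + A * r₀))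
        + M ^ q * ENNReal.ofReal (2 ^ (p * q) * ((1 + A) ^ (p * q + 1) - 1) * r₀ / r ^ 2) := by
  set v := r + A * r₀ with hv_def
  set D := (1 + A) ^ (p * q + 1) - 1
  have hr0 : 0 < r := hr₀.trans hr
  have hv : 0 < v := by positivity
  have hsub : ball x r ⊆ ball y v := fun z hz => by
    rw [mem_ball] at hz ⊢
    linarith [dist_triangle z x y]
  have hscale : ENNReal.ofReal ((v / r) ^ p) ^ q * ENNReal.ofReal (1 / r)
      = ENNReal.ofReal (1 / v) * ENNReal.ofReal ((v / r) ^ (p * q + 1)) := by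
    rw [ENNReal.ofReal_rpow_of_nonneg (by positivity) hq.le,
      ← ENNReal.ofReal_mul (by positivity), ← ENNReal.ofReal_mul (by positivity),
      ← Real.rpow_mul (by positivity), Real.rpow_add_one (by positivity)]
    congr 1
    field_simp
  have hgrowth : (v / r) ^ (p * q + 1) ≤ 1 + r₀ / r * D := by
    have hvr : v / r = 1 + A * r₀ / r := by rw [hv_def]; field_simp
    have h := one_add_rpow_le_chord (γ := p * q + 1) (by nlinarith) hA
      (t := A * r₀ / r) (by positivity) (by rw [div_le_iff₀ hr0]; nlinarith)
    rwa [← hvr, show A * r₀ / r / A = r₀ / r by field_simp] at h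
  have hD : 0 ≤ D := sub_nonneg.mpr (Real.one_le_rpow (by linarith) (by nlinarith))
  have herr : 1 / v * (r₀ / r * D) ≤ D * r₀ / r ^ 2 := by
    calc 1 / v * (r₀ / r * D) = D * r₀ / (r * v) := by field_simp
      _ ≤ D * r₀ / (r * r) := by gcongr; linarith [mul_pos hA hr₀]
      _ = D * r₀ / r ^ 2 := by ring
  calc ballRatio μ p x r ^ q * ENNReal.ofReal (1 / r)
      ≤ (ballRatio μ p y v * ENNReal.ofReal ((v / r) ^ p)) ^ q * ENNReal.ofReal (1 / r) := by
        gcongr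
        exact ballRatio_le_mul_of_ball_subset hr0 hv hsub
    _ = ballRatio μ p y v ^ q * ENNReal.ofReal (1 / v)
          * ENNReal.ofReal ((v / r) ^ (p * q + 1)) := by
        rw [ENNReal.mul_rpow_of_nonneg _ _ hq.le, mul_assoc, hscale, mul_assoc]
    _ ≤ ballRatio μ p y v ^ q * ENNReal.ofReal (1 / v) * ENNReal.ofReal (1 + r₀ / r * D) := by
        gcongr
    _ = ballRatio μ p y v ^ q * ENNReal.ofReal (1 / v)
          + ballRatio μ p y v ^ q * ENNReal.ofReal (1 / v * (r₀ / r * D)) := by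
        rw [ENNReal.ofReal_add zero_le_one (by positivity), ENNReal.ofReal_one, mul_add, mul_one,
          mul_assoc, ← ENNReal.ofReal_mul (by positivity)]
    _ ≤ ballRatio μ p y v ^ q * ENNReal.ofReal (1 / v)
          + M ^ q * ENNReal.ofReal (2 ^ (p * q)) * ENNReal.ofReal (D * r₀ / r ^ 2) := by
        gcongr
        exact ballRatio_rpow_le_of_dist_le hM hq hxy (by linarith) hv
    _ = _ := by
        rw [mul_assoc, ← ENNReal.ofReal_mul (by positivity)]
        ring_nf

lemma setLIntegral_Ioi_ballRatio_le {M : ℝ≥0∞} (hM : ∀ s > 0, ballRatio μ p x s ≤ M)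
    (hp : 0 ≤ p) (hq : 0 < q) {A r₀ : ℝ} (hA : 0 < A) (hr₀ : 0 < r₀)
    (hxy : dist x y ≤ A * r₀) :
    ∫⁻ r in Ioi r₀, ballRatio μ p x r ^ q * ENNReal.ofReal (1 / r)
      ≤ (∫⁻ r in Ioi 0, ballRatio μ p y r ^ q * ENNReal.ofReal (1 / r))
        + M ^ q * ENNReal.ofReal (2 ^ (p * q) * ((1 + A) ^ (p * q + 1) - 1)) := by
  set G : ℝ → ℝ≥0∞ := fun r => ballRatio μ p y r ^ q * ENNReal.ofReal (1 / r)
  set C := 2 ^ (p * q) * ((1 + A) ^ (p * q + 1) - 1)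
  have hC : 0 ≤ C := mul_nonneg (by positivity)
    (sub_nonneg.mpr (Real.one_le_rpow (by linarith) (by nlinarith)))
  calc ∫⁻ r in Ioi r₀, ballRatio μ p x r ^ q * ENNReal.ofReal (1 / r)
      ≤ ∫⁻ r in Ioi r₀, (G (r + A * r₀) + M ^ q * ENNReal.ofReal (C * r₀ / r ^ 2)) :=
        setLIntegral_mono' measurableSet_Ioi fun r hr =>
          ballRatio_rpow_mul_inv_le hM hp hq hA hr₀ hr hxy
    _ = (∫⁻ r in Ioi (r₀ + A * r₀), G r) + M ^ q * ENNReal.ofReal (C * r₀ / r₀) := by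
        rw [lintegral_add_right _ (by fun_prop), lintegral_const_mul _ (by fun_prop),
          setLIntegral_Ioi_comp_add_right, setLIntegral_Ioi_ofReal_div_sq (by positivity) hr₀]
    _ ≤ (∫⁻ r in Ioi 0, G r) + M ^ q * ENNReal.ofReal C := by
        rw [mul_div_assoc, div_self hr₀.ne', mul_one]
        gcongr
        positivity

end BallRatio

lemma Tpot_rpow (n : ℕ) {α q : ℝ} (hq : q ≠ 0) (μ : Measure (EuclideanSpace ℝ (Fin n)))
    (y : EuclideanSpace ℝ (Fin n)) :
    Tpot n α q μ y ^ q = ∫⁻ r in Ioi 0, ballRatio μ (n - α) y r ^ q * ENNReal.ofReal (1 / r) := by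
  rw [Tpot, ← ENNReal.rpow_mul, one_div_mul_cancel hq, ENNReal.rpow_one]
  rfl

lemma ballRatio_le_Mfrac {n : ℕ} {α : ℝ} {μ : Measure (EuclideanSpace ℝ (Fin n))}
    {x : EuclideanSpace ℝ (Fin n)} {s : ℝ} (hs : 0 < s) :
    ballRatio μ (n - α) x s ≤ Mfrac n α μ x :=
  le_iSup₂ (f := fun r (_ : 0 < r) => ballRatio μ (n - α) x r) s hs

theorem continuous_tail_estimate_tau_general (n : ℕ) (α q A : ℝ)
    (hαn : α < n) (hq : 0 < q) (hA : 0 < A) :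
    ∃ Cs : ℝ, 0 < Cs ∧
      ∀ (μ : Measure (EuclideanSpace ℝ (Fin n))), IsLocallyFiniteMeasure μ →
        ∀ lam ε r₀ : ℝ, 0 < lam → 0 < ε → ε < 1 → 0 < r₀ →
          ∀ x y : EuclideanSpace ℝ (Fin n), dist x y ≤ A * r₀ →
            (Tpot n α q μ y) ^ q ≤ ENNReal.ofReal lam →
            (Mfrac n α μ x) ^ q ≤ ENNReal.ofReal (ε * lam) →
            ∫⁻ r in Set.Ioi r₀,
                (μ (Metric.ball x r) / ENNReal.ofReal (r ^ ((n : ℝ) - α))) ^ q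
                  * ENNReal.ofReal (1 / r)
              ≤ ENNReal.ofReal ((1 + Cs * ε) * lam) := by
  have hp : 0 ≤ (n : ℝ) - α := by linarith
  set β := ((n : ℝ) - α) * q
  have hD : 0 < (1 + A) ^ (β + 1) - 1 :=
    sub_pos.mpr (Real.one_lt_rpow (by linarith) (by positivity))
  refine ⟨2 ^ β * ((1 + A) ^ (β + 1) - 1), by positivity, ?_⟩
  intro μ _ lam ε r₀ hlam hε _ hr₀ x y hxy hT hM
  rw [Tpot_rpow n hq.ne'] at hT
  calc ∫⁻ r in Ioi r₀, ballRatio μ (n - α) x r ^ q * ENNReal.ofReal (1 / r)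
      ≤ (∫⁻ r in Ioi 0, ballRatio μ (n - α) y r ^ q * ENNReal.ofReal (1 / r))
          + Mfrac n α μ x ^ q * ENNReal.ofReal (2 ^ β * ((1 + A) ^ (β + 1) - 1)) :=
        setLIntegral_Ioi_ballRatio_le (fun s hs => ballRatio_le_Mfrac hs) hp hq hA hr₀ hxy
    _ ≤ ENNReal.ofReal lam
          + ENNReal.ofReal (ε * lam) * ENNReal.ofReal (2 ^ β * ((1 + A) ^ (β + 1) - 1)) := by
        gcongr
    _ = ENNReal.ofReal ((1 + 2 ^ β * ((1 + A) ^ (β + 1) - 1) * ε) * lam) := by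
        rw [← ENNReal.ofReal_mul (by positivity), ← ENNReal.ofReal_add hlam.le (by positivity)]
        ring_nf

/-- **Tail estimate for the continuous potential** (proof of Theorem 1.4): if
`|x − y| ≤ A r₀`, `(T^q_α(μ)(y))^q ≤ λ` and `(M_α(μ)(x))^q ≤ ελ`, then
`∫_{r₀}^∞ (μ(B(x,r))/r^{n−α})^q dr/r ≤ (1 + C_s ε)λ`. -/
theorem continuous_tail_estimate_tau (n : ℕ) (hn : 1 ≤ n) (α q A : ℝ)
    (hα : 0 < α) (hαn : α < n) (hq : 0 < q) (hA : 0 < A) :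
    ∃ Cs : ℝ, 0 < Cs ∧
      ∀ (μ : Measure (EuclideanSpace ℝ (Fin n))), IsLocallyFiniteMeasure μ →
        ∀ lam ε r₀ : ℝ, 0 < lam → 0 < ε → ε < 1 → 0 < r₀ →
          ∀ x y : EuclideanSpace ℝ (Fin n), dist x y ≤ A * r₀ →
            (Tpot n α q μ y) ^ q ≤ ENNReal.ofReal lam →
            (Mfrac n α μ x) ^ q ≤ ENNReal.ofReal (ε * lam) →
            ∫⁻ r in Set.Ioi r₀,
                (μ (Metric.ball x r) / ENNReal.ofReal (r ^ ((n : ℝ) - α))) ^ q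
                  * ENNReal.ofReal (1 / r)
              ≤ ENNReal.ofReal ((1 + Cs * ε) * lam) :=
  continuous_tail_estimate_tau_general n α q A hαn hq hA

end
end

section
/- Let n ≥ 1, 0 < α < n and 0 < q < ∞, let B = B(x₀,R) be an open ball in ℝ^n, let μ be a nonnegative locally finite Borel measure, and set μ_B = χ_B μ. Then for every x ∉ 2B = B(x₀,2R): T^q_α(μ_B)(x) ≤ ((n−α)q)^{−1/q} μ(B)/R^{n−α}. Consequently, there exists a constant c(n,q,α) > 0 depending only on n, q, α such that if ‖M_α(μ_B)‖_{L∞(B)} ≤ 1 then {x ∈ ℝ^n : T^q_α(μ_B)(x) > c(n,q,α)} ⊆ 2B. -/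
open MeasureTheory Metric Set ENNReal

noncomputable section

/-!
For `x ∉ 2B` the ball `B(x, r)` misses `B` when `r ≤ R`, and carries `μ_B`-mass at most `μ(B)`
otherwise, so the integrand of `T^q_α(μ_B)(x)` is at most `μ(B)^q r^{-(n-α)q-1}` on `(R, ∞)` and
vanishes before; integrating gives the decay bound. If `M_α(μ_B)(y) ≤ 1` at a single `y ∈ B`,
then `B ⊆ B(y, 2R)` gives `μ(B) ≤ (2R)^{n-α}`, and the decay bound becomes
`T^q_α(μ_B)(x) ≤ ((n-α)q)^{-1/q} 2^{n-α}` off `2B`.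
-/

lemma lintegral_Ioi_rpow_neg_sub_one {s R : ℝ} (hs : 0 < s) (hR : 0 < R) :
    ∫⁻ r in Ioi R, ENNReal.ofReal (r ^ (-s - 1)) = ENNReal.ofReal (R ^ (-s) / s) := by
  have hexp : -s - 1 < -1 := by linarith
  rw [← ofReal_integral_eq_lintegral_ofReal (integrableOn_Ioi_rpow_of_lt hexp hR)
      (by filter_upwards [ae_restrict_mem measurableSet_Ioi] with r hr using
        Real.rpow_nonneg (hR.trans hr).le _),
    integral_Ioi_rpow_of_lt hexp hR, sub_add_cancel, neg_div_neg_eq]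

lemma div_ofReal_rpow_rpow_mul_ofReal_one_div (a : ℝ≥0∞) {p q r : ℝ} (hq : 0 ≤ q) (hr : 0 < r) :
    (a / ENNReal.ofReal (r ^ p)) ^ q * ENNReal.ofReal (1 / r) =
      a ^ q * ENNReal.ofReal (r ^ (-(p * q) - 1)) := by
  rw [ENNReal.div_rpow_of_nonneg _ _ hq, ENNReal.ofReal_rpow_of_pos (Real.rpow_pos_of_pos hr p),
    ← Real.rpow_mul hr.le, div_eq_mul_inv, mul_assoc,
    ← ENNReal.ofReal_inv_of_pos (Real.rpow_pos_of_pos hr _), ← ENNReal.ofReal_mul (by positivity),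
    Real.rpow_sub hr, Real.rpow_one, Real.rpow_neg hr.le]
  ring_nf

lemma Tpot_le_of_measure_ball_eq_zero {n : ℕ} {α q R : ℝ} (hαn : α < n) (hq : 0 < q)
    (hR : 0 < R) {ν : Measure (EuclideanSpace ℝ (Fin n))} {x : EuclideanSpace ℝ (Fin n)}
    (hν : ∀ r ≤ R, ν (ball x r) = 0) :
    Tpot n α q ν x ≤
      ν univ * ENNReal.ofReal ((((n : ℝ) - α) * q) ^ (-(1 / q)) / R ^ ((n : ℝ) - α)) := by
  set p : ℝ := (n : ℝ) - α
  have hpq : 0 < p * q := mul_pos (sub_pos.mpr hαn) hq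
  have hintegrand : ∀ r : ℝ, (ν (ball x r) / ENNReal.ofReal (r ^ p)) ^ q * ENNReal.ofReal (1 / r)
      ≤ (Ioi R).indicator (fun r => ν univ ^ q * ENNReal.ofReal (r ^ (-(p * q) - 1))) r := by
    intro r
    rcases le_or_gt r R with hr | hr
    · simp [hν r hr, ENNReal.zero_rpow_of_pos hq]
    · rw [indicator_of_mem (mem_Ioi.mpr hr),
        ← div_ofReal_rpow_rpow_mul_ofReal_one_div _ hq.le (hR.trans hr)]
      gcongr
      exact subset_univ _
  calc Tpot n α q ν x
      ≤ (∫⁻ r in Ioi (0 : ℝ),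
          (Ioi R).indicator (fun r => ν univ ^ q * ENNReal.ofReal (r ^ (-(p * q) - 1))) r)
          ^ (1 / q) := by
        unfold Tpot
        gcongr with r
        exact hintegrand r
    _ = (ν univ ^ q * ENNReal.ofReal (R ^ (-(p * q)) / (p * q))) ^ (1 / q) := by
        rw [lintegral_indicator measurableSet_Ioi, Measure.restrict_restrict measurableSet_Ioi,
          inter_eq_self_of_subset_left (Ioi_subset_Ioi hR.le),
          lintegral_const_mul _ (by fun_prop), lintegral_Ioi_rpow_neg_sub_one hpq hR]
    _ = ν univ * ENNReal.ofReal ((p * q) ^ (-(1 / q)) / R ^ p) := by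
        rw [ENNReal.mul_rpow_of_nonneg _ _ (by positivity), ← ENNReal.rpow_mul,
          mul_one_div_cancel hq.ne', ENNReal.rpow_one,
          ENNReal.ofReal_rpow_of_pos (by positivity), Real.div_rpow (by positivity) hpq.le,
          ← Real.rpow_mul hR.le, show -(p * q) * (1 / q) = -p by field_simp,
          Real.rpow_neg hR.le, Real.rpow_neg hpq.le]
        ring_nf

lemma restrict_ball_apply_ball_eq_zero {X : Type*} [PseudoMetricSpace X] [MeasurableSpace X]
    [OpensMeasurableSpace X] (μ : Measure X) {x₀ x : X} {R r : ℝ} (h : R + r ≤ dist x₀ x) :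
    μ.restrict (ball x₀ R) (ball x r) = 0 := by
  rw [Measure.restrict_apply measurableSet_ball, (ball_disjoint_ball h).symm.inter_eq,
    measure_empty]

lemma Tpot_restrict_ball_le {n : ℕ} {α q R : ℝ} (hαn : α < n) (hq : 0 < q) (hR : 0 < R)
    (μ : Measure (EuclideanSpace ℝ (Fin n))) {x₀ x : EuclideanSpace ℝ (Fin n)}
    (hx : x ∉ ball x₀ (2 * R)) :
    Tpot n α q (μ.restrict (ball x₀ R)) x ≤
      μ (ball x₀ R) * ENNReal.ofReal ((((n : ℝ) - α) * q) ^ (-(1 / q)) / R ^ ((n : ℝ) - α)) := by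
  have hdist : 2 * R ≤ dist x₀ x := by
    rw [dist_comm]
    exact not_lt.mp hx
  simpa only [Measure.restrict_apply_univ] using Tpot_le_of_measure_ball_eq_zero hαn hq hR
    fun r hr => restrict_ball_apply_ball_eq_zero μ (by linarith)

lemma measure_ball_le_of_Mfrac_le_one {n : ℕ} {α r : ℝ} {ν : Measure (EuclideanSpace ℝ (Fin n))}
    {y : EuclideanSpace ℝ (Fin n)} (h : Mfrac n α ν y ≤ 1) (hr : 0 < r) :
    ν (ball y r) ≤ ENNReal.ofReal (r ^ ((n : ℝ) - α)) := by
  have hratio : ν (ball y r) / ENNReal.ofReal (r ^ ((n : ℝ) - α)) ≤ 1 :=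
    (le_iSup₂ (f := fun r (_ : 0 < r) => ν (ball y r) / ENNReal.ofReal (r ^ ((n : ℝ) - α)))
      r hr).trans h
  rwa [ENNReal.div_le_iff (ENNReal.ofReal_pos.mpr (by positivity)).ne' ENNReal.ofReal_ne_top,
    one_mul] at hratio

lemma measure_ball_le_of_essSup_Mfrac_restrict_le_one {n : ℕ} {α R : ℝ} (hR : 0 < R)
    {μ : Measure (EuclideanSpace ℝ (Fin n))} {x₀ : EuclideanSpace ℝ (Fin n)}
    (h : essSup (Mfrac n α (μ.restrict (ball x₀ R))) (volume.restrict (ball x₀ R)) ≤ 1) :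
    μ (ball x₀ R) ≤ ENNReal.ofReal ((2 * R) ^ ((n : ℝ) - α)) := by
  have : (ae (volume.restrict (ball x₀ R))).NeBot := by
    rw [ae_neBot, Ne, Measure.restrict_eq_zero]
    exact (measure_ball_pos volume x₀ hR).ne'
  obtain ⟨y, hMy, hy⟩ := (((ae_le_essSup _).mono fun y hy => hy.trans h).and
    (ae_restrict_mem measurableSet_ball)).exists
  have hB : ball x₀ R ⊆ ball y (2 * R) := by
    intro z hz
    rw [mem_ball] at hy hz ⊢
    linarith [dist_triangle_right z y x₀]
  calc μ (ball x₀ R) = μ.restrict (ball x₀ R) (ball y (2 * R)) := by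
        rw [Measure.restrict_apply measurableSet_ball, inter_eq_self_of_subset_right hB]
    _ ≤ ENNReal.ofReal ((2 * R) ^ ((n : ℝ) - α)) :=
        measure_ball_le_of_Mfrac_le_one hMy (by positivity)

theorem potential_localization_general (n : ℕ) (α q : ℝ)
    (hαn : α < n) (hq : 0 < q) :
    (∀ (μ : Measure (EuclideanSpace ℝ (Fin n))), IsLocallyFiniteMeasure μ →
      ∀ (x₀ : EuclideanSpace ℝ (Fin n)) (R : ℝ), 0 < R →
        ∀ x ∉ Metric.ball x₀ (2 * R),
          Tpot n α q (μ.restrict (Metric.ball x₀ R)) x ≤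
            ENNReal.ofReal ((((n : ℝ) - α) * q) ^ (-(1 / q)) *
              (μ (Metric.ball x₀ R)).toReal / R ^ ((n : ℝ) - α))) ∧
    ∃ c : ℝ, 0 < c ∧
      ∀ (μ : Measure (EuclideanSpace ℝ (Fin n))), IsLocallyFiniteMeasure μ →
        ∀ (x₀ : EuclideanSpace ℝ (Fin n)) (R : ℝ), 0 < R →
          essSup (Mfrac n α (μ.restrict (Metric.ball x₀ R)))
              (volume.restrict (Metric.ball x₀ R)) ≤ 1 →
          {x | ENNReal.ofReal c < Tpot n α q (μ.restrict (Metric.ball x₀ R)) x} ⊆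
            Metric.ball x₀ (2 * R) := by
  have hp : 0 < (n : ℝ) - α := sub_pos.mpr hαn
  refine ⟨fun μ _ x₀ R hR x hx => ?_, ⟨(((n : ℝ) - α) * q) ^ (-(1 / q)) * 2 ^ ((n : ℝ) - α),
    by positivity, fun μ _ x₀ R hR hM x hxT => ?_⟩⟩
  · calc _ ≤ _ := Tpot_restrict_ball_le hαn hq hR μ hx
      _ = _ := by
        rw [← ENNReal.ofReal_toReal measure_ball_lt_top.ne, ← ENNReal.ofReal_mul (by positivity),
          ENNReal.toReal_ofReal (by positivity)]
        congr 1
        ring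
  · by_contra hx
    refine hxT.not_ge ((Tpot_restrict_ball_le hαn hq hR μ hx).trans ?_)
    calc _ ≤ ENNReal.ofReal ((2 * R) ^ ((n : ℝ) - α)) *
            ENNReal.ofReal ((((n : ℝ) - α) * q) ^ (-(1 / q)) / R ^ ((n : ℝ) - α)) := by
          gcongr
          exact measure_ball_le_of_essSup_Mfrac_restrict_le_one hR hM
      _ = _ := by
        rw [← ENNReal.ofReal_mul (by positivity), Real.mul_rpow zero_le_two hR.le]
        congr 1
        field_simp

/-- **Decay of the potential of a measure restricted to a ball** (proof of Theorem 1.3):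
for `x ∉ 2B`, `T^q_α(μ_B)(x) ≤ ((n−α)q)^{−1/q} μ(B)/R^{n−α}`; consequently there is
`c(n,q,α) > 0` such that `‖M_α(μ_B)‖_{L^∞(B)} ≤ 1` implies `{T^q_α(μ_B) > c} ⊆ 2B`. -/
theorem potential_localization (n : ℕ) (hn : 1 ≤ n) (α q : ℝ)
    (hα : 0 < α) (hαn : α < n) (hq : 0 < q) :
    (∀ (μ : Measure (EuclideanSpace ℝ (Fin n))), IsLocallyFiniteMeasure μ →
      ∀ (x₀ : EuclideanSpace ℝ (Fin n)) (R : ℝ), 0 < R →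
        ∀ x ∉ Metric.ball x₀ (2 * R),
          Tpot n α q (μ.restrict (Metric.ball x₀ R)) x ≤
            ENNReal.ofReal ((((n : ℝ) - α) * q) ^ (-(1 / q)) *
              (μ (Metric.ball x₀ R)).toReal / R ^ ((n : ℝ) - α))) ∧
    ∃ c : ℝ, 0 < c ∧
      ∀ (μ : Measure (EuclideanSpace ℝ (Fin n))), IsLocallyFiniteMeasure μ →
        ∀ (x₀ : EuclideanSpace ℝ (Fin n)) (R : ℝ), 0 < R →
          essSup (Mfrac n α (μ.restrict (Metric.ball x₀ R)))
              (volume.restrict (Metric.ball x₀ R)) ≤ 1 →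
          {x | ENNReal.ofReal c < Tpot n α q (μ.restrict (Metric.ball x₀ R)) x} ⊆
            Metric.ball x₀ (2 * R) :=
  potential_localization_general n α q hαn hq
end
end

section
/- Let n ≥ 2 and 0 < q < ∞, and let μ be the measure on ℝ^n given by dμ = |x|^{−1} χ_{B(0,1)}(x) dx. Then there exist constants c₁, c₂ > 0, depending only on n and q, such that for all x with 0 < |x| ≤ 1/2: c₁ (log(1/|x|))^{1/q} ≤ T^q_1(μ)(x) ≤ c₂ (log(1/|x|))^{1/q}. -/
open MeasureTheory Metric Set ENNReal

noncomputable section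

/-!
Let `ν = ‖y‖⁻¹ χ_{B(0,1)}(y) dy` in dimension `d ≥ 2`. Polar coordinates give
`ν(B(0,ρ)) = M ρ^(d-1)` for `ρ ≤ 1` and `ν(B(0,ρ)) ≤ M ρ^(d-1)` for all `ρ`. Comparing `B(x,r)`
with `B(0,r/2) ⊆ B(x,r) ⊆ B(0,3r)` shows that `ν(B(x,r))/r^(d-1)` is bounded below by a
constant for `2|x| < r ≤ 2` and above by a constant for `|x|/2 < r ≤ 2`; both ranges have
length `log(1/|x|) + O(1)` for `dr/r`. Below them the ratio is `O(r/|x|)`, the density being at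
most `2/|x|` on `B(x,r)`, and above them it is `O(1/r)` by the finite total mass, so these radii
contribute `O(1)`, which is absorbed into `log(1/|x|) ≥ log 2`.
-/

open Module
open scoped Interval

section Polar

variable {E : Type*} [NormedAddCommGroup E] [NormedSpace ℝ E] [FiniteDimensional ℝ E]
  [MeasurableSpace E] [BorelSpace E] [Nontrivial E] (μ : Measure E) [μ.IsAddHaarMeasure]

theorem integral_ball_norm_rpow_neg {s : ℝ} (hs : s < finrank ℝ E) {ρ : ℝ} (hρ : 0 ≤ ρ) :
    ∫ y in ball (0 : E) ρ, ‖y‖ ^ (-s) ∂μ =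
      finrank ℝ E * μ.real (ball 0 1) / (finrank ℝ E - s) * ρ ^ ((finrank ℝ E : ℝ) - s) := by
  have hd : 1 ≤ finrank ℝ E := finrank_pos
  calc ∫ y in ball (0 : E) ρ, ‖y‖ ^ (-s) ∂μ
      = ∫ y, (Iio ρ).indicator (fun t : ℝ => t ^ (-s)) ‖y‖ ∂μ := by
        rw [← integral_indicator measurableSet_ball]
        congr with y
        simp [indicator]
    _ = finrank ℝ E * μ.real (ball 0 1) * ∫ t in (0)..ρ, t ^ ((finrank ℝ E : ℝ) - 1 - s) := by
        rw [integral_fun_norm_addHaar, intervalIntegral.integral_of_le hρ,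
          integral_Ioc_eq_integral_Ioo, nsmul_eq_mul, smul_eq_mul, mul_assoc]
        congr 2
        simp_rw [← indicator_smul_apply (Iio ρ) (fun y : ℝ => y ^ (finrank ℝ E - 1))]
        rw [setIntegral_indicator measurableSet_Iio, Ioi_inter_Iio]
        refine setIntegral_congr_fun measurableSet_Ioo fun t ht => ?_
        rw [smul_eq_mul, ← Real.rpow_natCast, ← Real.rpow_add ht.1, Nat.cast_sub hd]
        ring_nf
    _ = _ := by
        rw [integral_rpow (Or.inl (by linarith)),
          show (finrank ℝ E : ℝ) - 1 - s + 1 = finrank ℝ E - s by ring,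
          Real.zero_rpow (by linarith)]
        ring

theorem lintegral_ball_norm_rpow_neg {s : ℝ} (hs : s < finrank ℝ E) {ρ : ℝ} (hρ : 0 ≤ ρ) :
    ∫⁻ y in ball (0 : E) ρ, ENNReal.ofReal (‖y‖ ^ (-s)) ∂μ =
      ENNReal.ofReal (finrank ℝ E * μ.real (ball 0 1) / (finrank ℝ E - s) *
        ρ ^ ((finrank ℝ E : ℝ) - s)) := by
  rw [← integral_ball_norm_rpow_neg μ hs hρ, ofReal_integral_eq_lintegral_ofReal]
  · refine integrableOn_ball_of_norm_le_rpow (C := 1) finrank_pos hs (.of_forall fun y => ?_)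
      (measurable_norm.pow_const _).aestronglyMeasurable
    rw [one_mul, Real.norm_of_nonneg (by positivity)]
  · exact .of_forall fun y => by positivity

end Polar

section LogarithmicIntegrals

variable {a b c q : ℝ}

theorem lintegral_Ioc_one_div (ha : 0 < a) (hab : a ≤ b) :
    ∫⁻ r in Ioc a b, ENNReal.ofReal (1 / r) = ENNReal.ofReal (Real.log (b / a)) := by
  have h0 : (0 : ℝ) ∉ [[a, b]] := by
    rw [uIcc_of_le hab]
    exact fun h => ha.not_ge h.1
  rw [← integral_one_div h0, intervalIntegral.integral_of_le hab,
    ofReal_integral_eq_lintegral_ofReal]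
  · exact (intervalIntegrable_iff_integrableOn_Ioc_of_le hab).1
      (intervalIntegral.intervalIntegrable_one_div (fun x hx => ne_of_mem_of_not_mem hx h0)
        continuousOn_id)
  · filter_upwards [ae_restrict_mem measurableSet_Ioc] with r hr
    exact (one_div_pos.2 (ha.trans hr.1)).le

theorem lintegral_Ioc_zero_mul_rpow (hq : 0 < q) (hc : 0 ≤ c) (ha : 0 ≤ a) :
    ∫⁻ r in Ioc 0 a, ENNReal.ofReal (c * r) ^ q * ENNReal.ofReal (1 / r) =
      ENNReal.ofReal ((c * a) ^ q / q) := by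
  have hint : IntegrableOn (fun r => c ^ q * r ^ (q - 1)) (Ioc 0 a) :=
    (intervalIntegrable_iff_integrableOn_Ioc_of_le ha).1
      ((intervalIntegral.intervalIntegrable_rpow' (by linarith)).const_mul _)
  calc ∫⁻ r in Ioc 0 a, ENNReal.ofReal (c * r) ^ q * ENNReal.ofReal (1 / r)
      = ∫⁻ r in Ioc 0 a, ENNReal.ofReal (c ^ q * r ^ (q - 1)) := by
        refine setLIntegral_congr_fun measurableSet_Ioc fun r hr => ?_
        have hr0 : 0 ≤ r := hr.1.le
        rw [ENNReal.ofReal_rpow_of_nonneg (mul_nonneg hc hr0) hq.le,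
          ← ENNReal.ofReal_mul (by positivity), Real.mul_rpow hc hr0,
          Real.rpow_sub_one hr.1.ne']
        ring_nf
    _ = ENNReal.ofReal ((c * a) ^ q / q) := by
        rw [← ofReal_integral_eq_lintegral_ofReal hint]
        · rw [← intervalIntegral.integral_of_le ha, intervalIntegral.integral_const_mul,
            integral_rpow (Or.inl (by linarith)), sub_add_cancel, Real.zero_rpow hq.ne',
            Real.mul_rpow hc ha]
          ring_nf
        · filter_upwards [ae_restrict_mem measurableSet_Ioc] with r hr
          have := hr.1
          positivity

theorem lintegral_Ioi_div_rpow (hq : 0 < q) (hc : 0 ≤ c) (ha : 0 < a) :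
    ∫⁻ r in Ioi a, ENNReal.ofReal (c / r) ^ q * ENNReal.ofReal (1 / r) =
      ENNReal.ofReal ((c / a) ^ q / q) := by
  have hint : IntegrableOn (fun r => c ^ q * r ^ (-q - 1)) (Ioi a) :=
    (integrableOn_Ioi_rpow_of_lt (by linarith) ha).const_mul _
  calc ∫⁻ r in Ioi a, ENNReal.ofReal (c / r) ^ q * ENNReal.ofReal (1 / r)
      = ∫⁻ r in Ioi a, ENNReal.ofReal (c ^ q * r ^ (-q - 1)) := by
        refine setLIntegral_congr_fun measurableSet_Ioi fun r hr => ?_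
        have hr0 : 0 < r := ha.trans hr
        rw [ENNReal.ofReal_rpow_of_nonneg (div_nonneg hc hr0.le) hq.le,
          ← ENNReal.ofReal_mul (by positivity), Real.div_rpow hc hr0.le,
          Real.rpow_sub_one hr0.ne', Real.rpow_neg hr0.le]
        ring_nf
    _ = ENNReal.ofReal ((c / a) ^ q / q) := by
        rw [← ofReal_integral_eq_lintegral_ofReal hint]
        · rw [integral_const_mul, integral_Ioi_rpow_of_lt (by linarith) ha,
            show -q - 1 + 1 = -q by ring, Real.div_rpow hc ha.le, Real.rpow_neg ha.le]
          ring_nf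
        · filter_upwards [ae_restrict_mem measurableSet_Ioi] with r hr
          have := ha.trans hr
          positivity

end LogarithmicIntegrals

theorem add_mul_log_four_div_le {A B L : ℝ} (hA : 0 ≤ A) (hB : 0 ≤ B) (hL₀ : 0 < L)
    (hL : L ≤ 1 / 2) :
    A + B * Real.log (4 / L) ≤ (A / Real.log 2 + 3 * B) * Real.log (1 / L) := by
  have hlog2 : 0 < Real.log 2 := Real.log_pos one_lt_two
  have h2L : Real.log 2 ≤ Real.log (1 / L) :=
    Real.log_le_log two_pos (by rw [le_div_iff₀ hL₀]; linarith)
  have h4L : Real.log (4 / L) = 2 * Real.log 2 + Real.log (1 / L) := by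
    rw [show 4 / L = 2 ^ 2 * (1 / L) by ring, Real.log_mul (by norm_num) (by positivity),
      Real.log_pow]
    push_cast
    ring
  have hA' : A ≤ A / Real.log 2 * Real.log (1 / L) := by
    rw [div_mul_eq_mul_div, le_div_iff₀ hlog2]
    exact mul_le_mul_of_nonneg_left h2L hA
  rw [h4L]
  nlinarith

theorem ENNReal.ofReal_rpow_mul_rpow_one_div {a c q : ℝ} (hc : 0 ≤ c) (ha : 0 ≤ a)
    (hq : 0 < q) :
    ENNReal.ofReal (c ^ q * a) ^ (1 / q) = ENNReal.ofReal (c * a ^ (1 / q)) := by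
  rw [ENNReal.ofReal_rpow_of_nonneg (by positivity) (by positivity),
    Real.mul_rpow (by positivity) ha, ← Real.rpow_mul hc, mul_one_div_cancel hq.ne',
    Real.rpow_one]

section InvNormMeasure

variable {E : Type*} [NormedAddCommGroup E] [MeasurableSpace E] (μ : Measure E)

def invNormMeasure : Measure E :=
  μ.withDensity ((ball (0 : E) 1).indicator fun z => ENNReal.ofReal ‖z‖⁻¹)

variable [NormedSpace ℝ E]

-- `∫_{B(0,1)} ‖y‖⁻¹ dμ(y)` in polar coordinates (`lintegral_ball_norm_inv`).
def invNormMass : ℝ := finrank ℝ E * μ.real (ball 0 1) / (finrank ℝ E - 1)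

variable {μ} [FiniteDimensional ℝ E] [μ.IsAddHaarMeasure]

theorem invNormMass_pos (hd : 1 < finrank ℝ E) : 0 < invNormMass μ := by
  have : Nontrivial E := nontrivial_of_finrank_pos (R := ℝ) (by omega)
  have hd' : (1 : ℝ) < finrank ℝ E := by exact_mod_cast hd
  have hω : 0 < μ.real (ball 0 1) :=
    ENNReal.toReal_pos (measure_ball_pos μ 0 one_pos).ne' measure_ball_lt_top.ne
  unfold invNormMass
  exact div_pos (by positivity) (by linarith)

theorem invNormMeasure_apply_le (s : Set E) :
    invNormMeasure μ s ≤ ∫⁻ y in s, ENNReal.ofReal ‖y‖⁻¹ ∂μ := by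
  rw [invNormMeasure, withDensity_apply' _ s]
  exact lintegral_mono (indicator_le_self' fun _ _ => zero_le)

variable [BorelSpace E]

theorem lintegral_ball_norm_inv (hd : 1 < finrank ℝ E) {ρ : ℝ} (hρ : 0 ≤ ρ) :
    ∫⁻ y in ball (0 : E) ρ, ENNReal.ofReal ‖y‖⁻¹ ∂μ =
      ENNReal.ofReal (invNormMass μ * ρ ^ ((finrank ℝ E : ℝ) - 1)) := by
  have : Nontrivial E := nontrivial_of_finrank_pos (R := ℝ) (by omega)
  simpa [invNormMass, Real.rpow_neg_one] using
    lintegral_ball_norm_rpow_neg μ (s := 1) (by exact_mod_cast hd) hρ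

theorem invNormMeasure_ball_le (hd : 1 < finrank ℝ E) {ρ : ℝ} (hρ : 0 ≤ ρ) :
    invNormMeasure μ (ball 0 ρ) ≤
      ENNReal.ofReal (invNormMass μ * ρ ^ ((finrank ℝ E : ℝ) - 1)) :=
  (invNormMeasure_apply_le _).trans_eq (lintegral_ball_norm_inv hd hρ)

theorem invNormMeasure_ball_of_le_one (hd : 1 < finrank ℝ E) {ρ : ℝ} (hρ₀ : 0 ≤ ρ)
    (hρ₁ : ρ ≤ 1) :
    invNormMeasure μ (ball 0 ρ) =
      ENNReal.ofReal (invNormMass μ * ρ ^ ((finrank ℝ E : ℝ) - 1)) := by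
  rw [invNormMeasure, withDensity_apply _ measurableSet_ball, ← lintegral_ball_norm_inv hd hρ₀]
  exact setLIntegral_congr_fun measurableSet_ball fun y hy =>
    indicator_of_mem (ball_subset_ball hρ₁ hy) _

theorem invNormMeasure_le (hd : 1 < finrank ℝ E) (s : Set E) :
    invNormMeasure μ s ≤ ENNReal.ofReal (invNormMass μ) := by
  calc invNormMeasure μ s ≤ invNormMeasure μ univ := measure_mono (subset_univ s)
    _ = ENNReal.ofReal (invNormMass μ) := by
      rw [invNormMeasure, withDensity_apply _ MeasurableSet.univ, Measure.restrict_univ,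
        lintegral_indicator measurableSet_ball, lintegral_ball_norm_inv hd zero_le_one,
        Real.one_rpow, mul_one]

variable {x : E} {r : ℝ}

theorem invNormMeasure_ball_div_le_of_le_half (hr : 0 < r) (hrx : r ≤ ‖x‖ / 2) :
    invNormMeasure μ (ball x r) / ENNReal.ofReal (r ^ ((finrank ℝ E : ℝ) - 1)) ≤
      ENNReal.ofReal (2 * μ.real (ball 0 1) / ‖x‖ * r) := by
  have hx : 0 < ‖x‖ := by linarith
  have hdens : ∀ y ∈ ball x r, ENNReal.ofReal ‖y‖⁻¹ ≤ ENNReal.ofReal (2 / ‖x‖) := by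
    intro y hy
    have : ‖x‖ / 2 ≤ ‖y‖ := by
      have := norm_sub_norm_le x y
      rw [← dist_eq_norm, dist_comm] at this
      linarith [mem_ball.1 hy]
    rw [← inv_div]
    exact ENNReal.ofReal_le_ofReal (inv_anti₀ (by positivity) this)
  refine ENNReal.div_le_of_le_mul' ?_
  calc invNormMeasure μ (ball x r)
      ≤ ∫⁻ _ in ball x r, ENNReal.ofReal (2 / ‖x‖) ∂μ :=
        (invNormMeasure_apply_le _).trans (setLIntegral_mono' measurableSet_ball hdens)
    _ = ENNReal.ofReal (2 / ‖x‖) * (ENNReal.ofReal (r ^ finrank ℝ E) * μ (ball 0 1)) := by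
        rw [setLIntegral_const, μ.addHaar_ball_of_pos x hr]
    _ = ENNReal.ofReal (r ^ ((finrank ℝ E : ℝ) - 1)) *
          ENNReal.ofReal (2 * μ.real (ball 0 1) / ‖x‖ * r) := by
        rw [← ofReal_measureReal measure_ball_lt_top.ne, ← ENNReal.ofReal_mul (by positivity),
          ← ENNReal.ofReal_mul (by positivity), ← ENNReal.ofReal_mul (by positivity),
          ← Real.rpow_natCast, Real.rpow_sub_one hr.ne']
        congr 1
        field_simp

theorem invNormMeasure_ball_div_le_of_le_two_mul (hd : 1 < finrank ℝ E) (hr : 0 < r)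
    (hxr : ‖x‖ ≤ 2 * r) :
    invNormMeasure μ (ball x r) / ENNReal.ofReal (r ^ ((finrank ℝ E : ℝ) - 1)) ≤
      ENNReal.ofReal (3 ^ ((finrank ℝ E : ℝ) - 1) * invNormMass μ) := by
  refine ENNReal.div_le_of_le_mul' ?_
  calc invNormMeasure μ (ball x r) ≤ invNormMeasure μ (ball 0 (3 * r)) :=
        measure_mono (ball_subset_ball' (by rw [dist_zero_right]; linarith))
    _ ≤ ENNReal.ofReal (invNormMass μ * (3 * r) ^ ((finrank ℝ E : ℝ) - 1)) :=
        invNormMeasure_ball_le hd (by positivity)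
    _ = _ := by
        rw [← ENNReal.ofReal_mul (by positivity), Real.mul_rpow (by norm_num) hr.le]
        ring_nf

theorem invNormMeasure_ball_div_le_of_one_le (hd : 1 < finrank ℝ E) (hr : 1 ≤ r) :
    invNormMeasure μ (ball x r) / ENNReal.ofReal (r ^ ((finrank ℝ E : ℝ) - 1)) ≤
      ENNReal.ofReal (invNormMass μ / r) := by
  have hM := (invNormMass_pos (μ := μ) hd).le
  have hpow : r ≤ r ^ ((finrank ℝ E : ℝ) - 1) :=
    Real.self_le_rpow_of_one_le hr (by
      have : (2 : ℝ) ≤ finrank ℝ E := by exact_mod_cast hd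
      linarith)
  refine ENNReal.div_le_of_le_mul' ((invNormMeasure_le hd _).trans ?_)
  rw [← ENNReal.ofReal_mul (by linarith)]
  refine ENNReal.ofReal_le_ofReal ?_
  calc invNormMass μ = r * (invNormMass μ / r) := by field_simp
    _ ≤ _ := mul_le_mul_of_nonneg_right hpow (by positivity)

theorem le_invNormMeasure_ball_div (hd : 1 < finrank ℝ E) (hxr : 2 * ‖x‖ < r) (hr : r ≤ 2) :
    ENNReal.ofReal (invNormMass μ / 2 ^ ((finrank ℝ E : ℝ) - 1)) ≤
      invNormMeasure μ (ball x r) / ENNReal.ofReal (r ^ ((finrank ℝ E : ℝ) - 1)) := by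
  have hr0 : 0 < r := lt_of_le_of_lt (by positivity : (0 : ℝ) ≤ 2 * ‖x‖) hxr
  have hM := invNormMass_pos (μ := μ) hd
  rw [ENNReal.le_div_iff_mul_le (.inl (ENNReal.ofReal_pos.2 (by positivity)).ne')
    (.inl ENNReal.ofReal_ne_top), ← ENNReal.ofReal_mul (by positivity)]
  calc ENNReal.ofReal (invNormMass μ / 2 ^ ((finrank ℝ E : ℝ) - 1) *
        r ^ ((finrank ℝ E : ℝ) - 1))
      = invNormMeasure μ (ball 0 (r / 2)) := by
        rw [invNormMeasure_ball_of_le_one hd (by positivity) (by linarith),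
          Real.div_rpow hr0.le zero_le_two]
        ring_nf
    _ ≤ invNormMeasure μ (ball x r) :=
        measure_mono (ball_subset_ball' (by rw [dist_comm, dist_zero_right]; linarith))

end InvNormMeasure

section PotentialIntegral

variable {E : Type*} [NormedAddCommGroup E] [MeasurableSpace E]

def potentialIntegral (ν : Measure E) (p q : ℝ) (x : E) (S : Set ℝ) : ℝ≥0∞ :=
  ∫⁻ r in S, (ν (ball x r) / ENNReal.ofReal (r ^ p)) ^ q * ENNReal.ofReal (1 / r)

theorem Tpot_eq_potentialIntegral (n : ℕ) (α q : ℝ) (ν : Measure (EuclideanSpace ℝ (Fin n)))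
    (x : EuclideanSpace ℝ (Fin n)) :
    Tpot n α q ν x = potentialIntegral ν (n - α) q x (Ioi 0) ^ (1 / q) :=
  rfl

theorem potentialIntegral_le_of_forall_le {ν : Measure E} {p q : ℝ} {x : E} {S : Set ℝ}
    {f : ℝ → ℝ≥0∞} (hS : MeasurableSet S) (hq : 0 ≤ q)
    (hf : ∀ r ∈ S, ν (ball x r) / ENNReal.ofReal (r ^ p) ≤ f r) :
    potentialIntegral ν p q x S ≤ ∫⁻ r in S, f r ^ q * ENNReal.ofReal (1 / r) :=
  setLIntegral_mono' hS fun r hr => by gcongr; exact hf r hr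

theorem potentialIntegral_union_le (ν : Measure E) (p q : ℝ) (x : E) (S T : Set ℝ) :
    potentialIntegral ν p q x (S ∪ T) ≤
      potentialIntegral ν p q x S + potentialIntegral ν p q x T :=
  lintegral_union_le _ _ _

end PotentialIntegral

section InvNormPotential

variable {E : Type*} [NormedAddCommGroup E] [NormedSpace ℝ E] [FiniteDimensional ℝ E]
  [MeasurableSpace E] [BorelSpace E] {μ : Measure E} [μ.IsAddHaarMeasure] {x : E} {q : ℝ}

theorem ofReal_mul_log_le_potentialIntegral (hd : 1 < finrank ℝ E) (hq : 0 < q)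
    (hx₀ : 0 < ‖x‖) (hx₁ : ‖x‖ ≤ 1) :
    ENNReal.ofReal ((invNormMass μ / 2 ^ ((finrank ℝ E : ℝ) - 1)) ^ q *
      Real.log (1 / ‖x‖)) ≤
      potentialIntegral (invNormMeasure μ) ((finrank ℝ E : ℝ) - 1) q x (Ioi 0) := by
  have hM := invNormMass_pos (μ := μ) hd
  set c := invNormMass μ / 2 ^ ((finrank ℝ E : ℝ) - 1)
  calc ENNReal.ofReal (c ^ q * Real.log (1 / ‖x‖))
      = ∫⁻ r in Ioc (2 * ‖x‖) 2, ENNReal.ofReal c ^ q * ENNReal.ofReal (1 / r) := by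
        rw [lintegral_const_mul' _ _ (by finiteness),
          lintegral_Ioc_one_div (by positivity) (by linarith),
          ENNReal.ofReal_rpow_of_nonneg (by positivity) hq.le,
          ← ENNReal.ofReal_mul (by positivity)]
        congr 3
        field_simp
    _ ≤ potentialIntegral (invNormMeasure μ) ((finrank ℝ E : ℝ) - 1) q x
          (Ioc (2 * ‖x‖) 2) :=
        setLIntegral_mono' measurableSet_Ioc fun r hr => by
          gcongr
          exact le_invNormMeasure_ball_div hd hr.1 hr.2
    _ ≤ _ := lintegral_mono_set fun r hr => (by positivity : (0 : ℝ) < 2 * ‖x‖).trans hr.1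

theorem potentialIntegral_Ioc_zero_half_norm_le (hq : 0 < q) (hx : 0 < ‖x‖) :
    potentialIntegral (invNormMeasure μ) ((finrank ℝ E : ℝ) - 1) q x (Ioc 0 (‖x‖ / 2)) ≤
      ENNReal.ofReal (μ.real (ball 0 1) ^ q / q) := by
  refine (potentialIntegral_le_of_forall_le measurableSet_Ioc hq.le fun r hr =>
    invNormMeasure_ball_div_le_of_le_half hr.1 hr.2).trans_eq ?_
  rw [lintegral_Ioc_zero_mul_rpow hq (by positivity) (by positivity)]
  congr 3
  field_simp

theorem potentialIntegral_Ioc_half_norm_two_le (hd : 1 < finrank ℝ E) (hq : 0 < q)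
    (hx₀ : 0 < ‖x‖) (hx₁ : ‖x‖ ≤ 4) :
    potentialIntegral (invNormMeasure μ) ((finrank ℝ E : ℝ) - 1) q x (Ioc (‖x‖ / 2) 2) ≤
      ENNReal.ofReal ((3 ^ ((finrank ℝ E : ℝ) - 1) * invNormMass μ) ^ q *
        Real.log (4 / ‖x‖)) := by
  have hM := invNormMass_pos (μ := μ) hd
  refine (potentialIntegral_le_of_forall_le measurableSet_Ioc hq.le fun r hr =>
    invNormMeasure_ball_div_le_of_le_two_mul hd (by linarith [hr.1]) (by linarith [hr.1])
    ).trans_eq ?_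
  rw [lintegral_const_mul' _ _ (by finiteness),
    lintegral_Ioc_one_div (by positivity) (by linarith),
    ENNReal.ofReal_rpow_of_nonneg (by positivity) hq.le, ← ENNReal.ofReal_mul (by positivity)]
  congr 3
  field_simp
  ring

theorem potentialIntegral_Ioi_two_le (hd : 1 < finrank ℝ E) (hq : 0 < q) :
    potentialIntegral (invNormMeasure μ) ((finrank ℝ E : ℝ) - 1) q x (Ioi 2) ≤
      ENNReal.ofReal ((invNormMass μ / 2) ^ q / q) :=
  (potentialIntegral_le_of_forall_le measurableSet_Ioi hq.le fun r hr =>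
    invNormMeasure_ball_div_le_of_one_le hd (by linarith [mem_Ioi.1 hr])).trans_eq
    (lintegral_Ioi_div_rpow hq (invNormMass_pos hd).le two_pos)

theorem exists_potentialIntegral_le_mul_log (hd : 1 < finrank ℝ E) (hq : 0 < q) :
    ∃ C > 0, ∀ x : E, 0 < ‖x‖ → ‖x‖ ≤ 1 / 2 →
      potentialIntegral (invNormMeasure μ) ((finrank ℝ E : ℝ) - 1) q x (Ioi 0) ≤
        ENNReal.ofReal (C * Real.log (1 / ‖x‖)) := by
  have hM := invNormMass_pos (μ := μ) hd
  set A := μ.real (ball 0 1) ^ q / q + (invNormMass μ / 2) ^ q / q with hA_def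
  set B := (3 ^ ((finrank ℝ E : ℝ) - 1) * invNormMass μ) ^ q
  have hA : 0 ≤ A := by positivity
  have hlog2 : 0 < Real.log 2 := Real.log_pos one_lt_two
  refine ⟨A / Real.log 2 + 3 * B, by positivity, fun x hx₀ hx₁ => ?_⟩
  have hsplit : Ioi (0 : ℝ) = (Ioc 0 (‖x‖ / 2) ∪ Ioc (‖x‖ / 2) 2) ∪ Ioi 2 := by
    rw [Ioc_union_Ioc_eq_Ioc (by positivity) (by linarith),
      Ioc_union_Ioi_eq_Ioi zero_le_two]
  calc potentialIntegral (invNormMeasure μ) ((finrank ℝ E : ℝ) - 1) q x (Ioi 0)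
      ≤ ENNReal.ofReal (μ.real (ball 0 1) ^ q / q) +
          ENNReal.ofReal (B * Real.log (4 / ‖x‖)) +
          ENNReal.ofReal ((invNormMass μ / 2) ^ q / q) := by
        rw [hsplit]
        refine (potentialIntegral_union_le _ _ _ _ _ _).trans (add_le_add ?_
          (potentialIntegral_Ioi_two_le hd hq))
        exact (potentialIntegral_union_le _ _ _ _ _ _).trans (add_le_add
          (potentialIntegral_Ioc_zero_half_norm_le hq hx₀)
          (potentialIntegral_Ioc_half_norm_two_le hd hq hx₀ (by linarith)))
    _ = ENNReal.ofReal (A + B * Real.log (4 / ‖x‖)) := by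
        have hlog : 0 ≤ Real.log (4 / ‖x‖) :=
          Real.log_nonneg (by rw [le_div_iff₀ hx₀]; linarith)
        rw [ENNReal.ofReal_add hA (by positivity), hA_def,
          ENNReal.ofReal_add (by positivity) (by positivity)]
        ring
    _ ≤ ENNReal.ofReal ((A / Real.log 2 + 3 * B) * Real.log (1 / ‖x‖)) :=
        ENNReal.ofReal_le_ofReal (add_mul_log_four_div_le hA (by positivity) hx₀ hx₁)

end InvNormPotential

/-- **Sharpness example** (Remark 3.1): for `dμ = |x|^{−1} χ_{B(0,1)} dx`,
`T^q_1(μ)(x) ≈ (log(1/|x|))^{1/q}` for `0 < |x| ≤ 1/2`. -/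
theorem sharpness_example (n : ℕ) (hn : 2 ≤ n) (q : ℝ) (hq : 0 < q) :
    ∃ c₁ c₂ : ℝ, 0 < c₁ ∧ 0 < c₂ ∧
      ∀ x : EuclideanSpace ℝ (Fin n), 0 < ‖x‖ → ‖x‖ ≤ 1 / 2 →
        ENNReal.ofReal (c₁ * Real.log (1 / ‖x‖) ^ (1 / q)) ≤
          Tpot n 1 q (volume.withDensity fun y =>
            Set.indicator (Metric.ball (0 : EuclideanSpace ℝ (Fin n)) 1)
              (fun z => ENNReal.ofReal ‖z‖⁻¹) y) x ∧
        Tpot n 1 q (volume.withDensity fun y =>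
            Set.indicator (Metric.ball (0 : EuclideanSpace ℝ (Fin n)) 1)
              (fun z => ENNReal.ofReal ‖z‖⁻¹) y) x ≤
          ENNReal.ofReal (c₂ * Real.log (1 / ‖x‖) ^ (1 / q)) := by
  have hd : 1 < finrank ℝ (EuclideanSpace ℝ (Fin n)) := by
    rw [finrank_euclideanSpace_fin]; omega
  have hM := invNormMass_pos (μ := (volume : Measure (EuclideanSpace ℝ (Fin n)))) hd
  obtain ⟨C, hC, hupper⟩ := exists_potentialIntegral_le_mul_log (μ := volume) hd hq
  rw [finrank_euclideanSpace_fin] at hupper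
  refine ⟨invNormMass volume / 2 ^ ((n : ℝ) - 1), C ^ (1 / q), by positivity, by positivity,
    fun x hx₀ hx₁ => ?_⟩
  have hlower := ofReal_mul_log_le_potentialIntegral (μ := volume) hd hq hx₀ (by linarith)
  rw [finrank_euclideanSpace_fin] at hlower
  have hlog : 0 ≤ Real.log (1 / ‖x‖) :=
    Real.log_nonneg (by rw [le_div_iff₀ hx₀]; linarith)
  change ENNReal.ofReal _ ≤ Tpot n 1 q (invNormMeasure volume) x ∧
    Tpot n 1 q (invNormMeasure volume) x ≤ ENNReal.ofReal _
  rw [Tpot_eq_potentialIntegral]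
  constructor
  · rw [← ENNReal.ofReal_rpow_mul_rpow_one_div (by positivity) hlog hq]
    exact ENNReal.rpow_le_rpow hlower (by positivity)
  · rw [← ENNReal.ofReal_rpow_mul_rpow_one_div (by positivity) hlog hq, ← Real.rpow_mul hC.le,
      one_div_mul_cancel hq.ne', Real.rpow_one]
    exact ENNReal.rpow_le_rpow (hupper x hx₀ hx₁) (by positivity)

end
end

section
/- Let q > 0, λ₀ > 0 and c > 0. Then there exist constants c′ > 0 and C > 0, depending only on q, c and λ₀, such that the following holds: if ν is a finite Borel measure on a measurable space X, and h : X → [0,∞] is measurable with ν({x : h(x) > 2λ}) ≤ e^{−cλ^q} ν({x : h(x) > λ}) for all λ > λ₀, then ∫_X exp( c′ h(x)^q ) dν(x) ≤ C ν(X). -/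
open MeasureTheory Metric Set ENNReal

noncomputable section

/-! Put `P k = 2^(k+1) L` with `L = 2λ₀`. Off the null set `{h = ∞}`, `exp (c' h^q)` is at most
`exp (c' P₀^q)` plus the sum over `k` of `exp (c' P_{k+1}^q)` on `{h > P k}`. The decay hypothesis at
`λ = 2^k L` gives `ν {h > P k} ≤ e^{-c (2^k L)^q} ν(X)`, and with `c' = c / (2·4^q)` the growth factor
`exp (c' (4·2^k L)^q)` eats only half of that decay. What remains is `exp (-(c/2) L^q (2^q)^k)`,
which `e^{-y} ≤ 1/y` bounds by a geometric series. -/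

open Filter Topology

lemma expE_ofReal {x : ℝ} (hx : 0 ≤ x) : expE (ENNReal.ofReal x) = ENNReal.ofReal (Real.exp x) := by
  rw [expE, if_neg ofReal_ne_top, toReal_ofReal hx]

lemma expE_mono : Monotone expE := by
  intro a b hab
  rcases eq_or_ne b ⊤ with rfl | hb
  · simp [expE]
  rw [expE, expE, if_neg hb, if_neg (ne_top_of_le_ne_top hb hab)]
  exact ofReal_le_ofReal (Real.exp_le_exp.2 (toReal_mono hb hab))

lemma Monotone.lintegral_comp_le_add_tsum {X : Type*} [MeasurableSpace X] {ν : Measure X}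
    {g : ℝ≥0∞ → ℝ≥0∞} (hg : Monotone g) {h : X → ℝ≥0∞} (hh : Measurable h) {P : ℕ → ℝ≥0∞}
    (hP : ∀ᵐ x ∂ν, ∃ k, h x ≤ P k) :
    ∫⁻ x, g (h x) ∂ν ≤ g (P 0) * ν univ + ∑' k, g (P (k + 1)) * ν {x | P k < h x} := by
  classical
  have hpt : ∀ᵐ x ∂ν, g (h x) ≤
      g (P 0) + ∑' k, {x | P k < h x}.indicator (fun _ => g (P (k + 1))) x := by
    filter_upwards [hP] with x hx
    cases hk : Nat.find hx with
    | zero => exact le_add_right (hg (hk ▸ Nat.find_spec hx))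
    | succ j =>
      have hle : h x ≤ P (j + 1) := hk ▸ Nat.find_spec hx
      have hlt : P j < h x := not_le.1 (Nat.find_min hx (by omega))
      calc g (h x) ≤ {x | P j < h x}.indicator (fun _ => g (P (j + 1))) x := by
            rw [indicator_of_mem (show x ∈ {x | P j < h x} from hlt)]; exact hg hle
        _ ≤ _ := ENNReal.le_tsum j
        _ ≤ _ := le_add_left le_rfl
  have hmeas : ∀ k, MeasurableSet {x | P k < h x} := fun k => hh measurableSet_Ioi
  calc ∫⁻ x, g (h x) ∂ν
      ≤ ∫⁻ x, g (P 0) + ∑' k, {x | P k < h x}.indicator (fun _ => g (P (k + 1))) x ∂ν :=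
        lintegral_mono_ae hpt
    _ = _ := by
      rw [lintegral_add_left measurable_const, lintegral_const,
        lintegral_tsum fun k => (measurable_const.indicator (hmeas k)).aemeasurable]
      simp_rw [lintegral_indicator_const (hmeas _)]

lemma ae_exists_le_of_tendsto_top {X : Type*} [MeasurableSpace X] {ν : Measure X}
    {h : X → ℝ≥0∞} {P : ℕ → ℝ≥0∞} (hP : Tendsto P atTop (𝓝 ⊤)) (htop : ν {x | h x = ⊤} = 0) :
    ∀ᵐ x ∂ν, ∃ k, h x ≤ P k := by
  filter_upwards [measure_eq_zero_iff_ae_notMem.1 htop] with x hx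
  exact ((hP.eventually_const_lt (lt_top_iff_ne_top.2 hx)).exists).imp fun _ => le_of_lt

lemma tendsto_ofReal_exp_neg_mul_rpow_atTop {c q : ℝ} (hc : 0 < c) (hq : 0 < q) :
    Tendsto (fun t : ℝ => ENNReal.ofReal (Real.exp (-c * t ^ q))) atTop (𝓝 0) := by
  have hexp : Tendsto (fun t : ℝ => -c * t ^ q) atTop atBot := by
    simp_rw [neg_mul]
    exact tendsto_neg_atTop_atBot.comp ((tendsto_rpow_atTop hq).const_mul_atTop hc)
  simpa using ENNReal.tendsto_ofReal (Real.tendsto_exp_atBot.comp hexp)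

lemma measure_eq_top_eq_zero_of_decay {X : Type*} [MeasurableSpace X] {ν : Measure X}
    [IsFiniteMeasure ν] {h : X → ℝ≥0∞} {q lam₀ c : ℝ} (hq : 0 < q) (hc : 0 < c)
    (hdecay : ∀ lam : ℝ, lam₀ < lam →
      ν {x | ENNReal.ofReal (2 * lam) < h x} ≤ ENNReal.ofReal (Real.exp (-c * lam ^ q)) * ν univ) :
    ν {x | h x = ⊤} = 0 := by
  have hlim := ENNReal.Tendsto.mul_const (tendsto_ofReal_exp_neg_mul_rpow_atTop hc hq)
    (Or.inr (measure_ne_top ν univ))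
  rw [zero_mul] at hlim
  refine nonpos_iff_eq_zero.1 (ge_of_tendsto hlim ?_)
  filter_upwards [eventually_gt_atTop lam₀] with lam hlam
  refine le_trans (measure_mono fun x hx => ?_) (hdecay lam hlam)
  change ENNReal.ofReal (2 * lam) < h x
  rw [show h x = ⊤ from hx]
  exact ofReal_lt_top

lemma Real.exp_neg_le_inv {y : ℝ} (hy : 0 < y) : Real.exp (-y) ≤ y⁻¹ := by
  rw [Real.exp_neg]
  exact inv_anti₀ hy ((le_add_of_nonneg_right zero_le_one).trans (Real.add_one_le_exp y))

lemma tsum_ofReal_exp_neg_mul_pow_le {a s : ℝ} (ha : 0 < a) (hs : 1 < s) :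
    ∑' k : ℕ, ENNReal.ofReal (Real.exp (-(a * s ^ k))) ≤ ENNReal.ofReal (a⁻¹ * (1 - s⁻¹)⁻¹) := by
  have hs0 : 0 < s := by linarith
  have hgeom : Summable fun k : ℕ => a⁻¹ * s⁻¹ ^ k :=
    (summable_geometric_of_lt_one (by positivity) (inv_lt_one_of_one_lt₀ hs)).mul_left _
  calc ∑' k : ℕ, ENNReal.ofReal (Real.exp (-(a * s ^ k)))
      ≤ ∑' k : ℕ, ENNReal.ofReal (a⁻¹ * s⁻¹ ^ k) := by
        refine ENNReal.tsum_le_tsum fun k => ofReal_le_ofReal ?_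
        calc Real.exp (-(a * s ^ k)) ≤ (a * s ^ k)⁻¹ := Real.exp_neg_le_inv (by positivity)
          _ = a⁻¹ * s⁻¹ ^ k := by rw [mul_inv, inv_pow]
    _ = ENNReal.ofReal (a⁻¹ * (1 - s⁻¹)⁻¹) := by
        rw [← ENNReal.ofReal_tsum_of_nonneg (fun k => by positivity) hgeom, tsum_mul_left,
          tsum_geometric_of_lt_one (by positivity) (inv_lt_one_of_one_lt₀ hs)]

lemma expE_mul_measure_lt_le_of_decay {X : Type*} [MeasurableSpace X] {ν : Measure X}
    {h : X → ℝ≥0∞} {q lam₀ c L : ℝ} (hq : 0 < q) (hc : 0 < c) (hL₀ : 0 ≤ L) (hL : lam₀ < L)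
    (hdecay : ∀ lam : ℝ, lam₀ < lam →
      ν {x | ENNReal.ofReal (2 * lam) < h x} ≤ ENNReal.ofReal (Real.exp (-c * lam ^ q)) * ν univ)
    (k : ℕ) :
    expE (ENNReal.ofReal (c / (2 * 4 ^ q)) * ENNReal.ofReal (2 * (2 ^ (k + 1) * L)) ^ q)
        * ν {x | ENNReal.ofReal (2 * (2 ^ k * L)) < h x}
      ≤ ENNReal.ofReal (Real.exp (-(c / 2 * L ^ q * (2 ^ q) ^ k))) * ν univ := by
  set y := 2 ^ k * L with hy
  have hy₀ : 0 ≤ y := by positivity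
  have hylam : lam₀ < y := hL.trans_le (le_mul_of_one_le_left hL₀ (one_le_pow₀ one_le_two))
  have hexponent : c / (2 * 4 ^ q) * (4 * y) ^ q + -c * y ^ q = -(c / 2 * L ^ q * (2 ^ q) ^ k) := by
    rw [Real.mul_rpow (by norm_num) hy₀, hy, Real.mul_rpow (by positivity) hL₀,
      ← Real.rpow_pow_comm zero_le_two]
    field_simp
    ring
  rw [show 2 * (2 ^ (k + 1) * L) = 4 * y by rw [hy]; ring,
    ofReal_rpow_of_nonneg (by positivity) hq.le, ← ofReal_mul (by positivity),
    expE_ofReal (by positivity), ← hexponent, Real.exp_add, ofReal_mul (Real.exp_nonneg _), mul_assoc]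
  exact mul_le_mul_right (hdecay y hylam) _

/-- **Abstract exponential integrability from level-set decay**: if
`ν({h > 2λ}) ≤ e^{−cλ^q} ν({h > λ})` for all `λ > λ₀`, then
`∫ exp(c′ h^q) dν ≤ C ν(X)`. -/
theorem exp_integrability_abstract (q lam₀ c : ℝ)
    (hq : 0 < q) (hlam₀ : 0 < lam₀) (hc : 0 < c) :
    ∃ c' C : ℝ, 0 < c' ∧ 0 < C ∧
      ∀ (X : Type) (_ : MeasurableSpace X) (ν : Measure X), IsFiniteMeasure ν →
        ∀ h : X → ℝ≥0∞, Measurable h →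
          (∀ lam : ℝ, lam₀ < lam →
            ν {x | ENNReal.ofReal (2 * lam) < h x} ≤
              ENNReal.ofReal (Real.exp (-c * lam ^ q)) * ν {x | ENNReal.ofReal lam < h x}) →
          ∫⁻ x, expE (ENNReal.ofReal c' * (h x) ^ q) ∂ν ≤ ENNReal.ofReal C * ν Set.univ := by
  set L := 2 * lam₀
  have hL : lam₀ < L := by linarith
  have hs : (1 : ℝ) < 2 ^ q := Real.one_lt_rpow one_lt_two hq
  have hs' : 0 < 1 - ((2 : ℝ) ^ q)⁻¹ := sub_pos.2 (inv_lt_one_of_one_lt₀ hs)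
  refine ⟨c / (2 * 4 ^ q), Real.exp (c / (2 * 4 ^ q) * (2 * L) ^ q)
    + (c / 2 * L ^ q)⁻¹ * (1 - (2 ^ q)⁻¹)⁻¹, by positivity, by positivity, ?_⟩
  intro X _ ν _ h hh hdecay
  replace hdecay : ∀ lam : ℝ, lam₀ < lam → ν {x | ENNReal.ofReal (2 * lam) < h x}
      ≤ ENNReal.ofReal (Real.exp (-c * lam ^ q)) * ν univ :=
    fun lam hlam => (hdecay lam hlam).trans (mul_le_mul_right (measure_mono (subset_univ _)) _)
  have hP : Tendsto (fun k : ℕ => ENNReal.ofReal (2 * (2 ^ k * L))) atTop (𝓝 ⊤) :=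
    ENNReal.tendsto_ofReal_atTop.comp <| Tendsto.const_mul_atTop two_pos <|
      (tendsto_pow_atTop_atTop_of_one_lt _root_.one_lt_two).atTop_mul_const (by positivity)
  have hfinite := ae_exists_le_of_tendsto_top hP (measure_eq_top_eq_zero_of_decay hq hc hdecay)
  calc ∫⁻ x, expE (ENNReal.ofReal (c / (2 * 4 ^ q)) * h x ^ q) ∂ν
      ≤ _ := (expE_mono.comp fun a b hab => mul_le_mul_right (rpow_le_rpow hab hq.le) _)
        |>.lintegral_comp_le_add_tsum hh hfinite
    _ ≤ ENNReal.ofReal (Real.exp (c / (2 * 4 ^ q) * (2 * L) ^ q)) * ν univ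
        + ∑' k : ℕ, ENNReal.ofReal (Real.exp (-(c / 2 * L ^ q * (2 ^ q) ^ k))) * ν univ := by
      simp only [Function.comp_apply]
      rw [pow_zero, one_mul, ofReal_rpow_of_nonneg (by positivity) hq.le,
        ← ofReal_mul (by positivity), expE_ofReal (by positivity)]
      exact add_le_add_right (ENNReal.tsum_le_tsum
        (expE_mul_measure_lt_le_of_decay hq hc (by positivity) hL hdecay)) _
    _ ≤ _ := by
      rw [ENNReal.tsum_mul_right, ← add_mul, ofReal_add (by positivity) (by positivity)]
      gcongr
      exact tsum_ofReal_exp_neg_mul_pow_le (by positivity) hs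

end
end
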